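/- arXiv:1905.05081 — 8 statements merged into one kernel-verified Lean document; each statement's English description precedes it below -/
import Mathlib

section
/- Fix $1 < r \le 2$. The inclusion $m_{\Psi_r} \hookrightarrow \ell_r$ is bounded, with norm at most $\left(\sum_{j=1}^{\infty} \frac{\log(j+1)^{r/r'}}{j^r}\right)^{1/r}$, and in particular the latter series converges. -/
open Finset

noncomputable def decRearr (x : ℕ → ℂ) (n : ℕ) : ℝ :=
  sInf {t : ℝ | ∃ J : Finset ℕ, J.card < n ∧
    t = sSup ((fun j => ‖x j‖) '' {j : ℕ | j ∉ J})}

lemma bddAbove_aux {z : ℕ → ℂ} {C : ℝ} (hC : ∀ j : ℕ, ‖z j‖ ≤ C)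
    (J : Finset ℕ) :
    BddAbove ((fun j => ‖z j‖) '' {j : ℕ | j ∉ J}) := by
  refine ⟨C, ?_⟩
  rintro t ⟨j, -, rfl⟩
  exact hC j

lemma sSup_aux_nonneg {z : ℕ → ℂ} {C : ℝ} (hC : ∀ j : ℕ, ‖z j‖ ≤ C)
    (J : Finset ℕ) :
    0 ≤ sSup ((fun j => ‖z j‖) '' {j : ℕ | j ∉ J}) := by
  obtain ⟨j, hj⟩ := Infinite.exists_notMem_finset J
  exact le_trans (norm_nonneg (z j))
    (le_csSup (bddAbove_aux hC J) ⟨j, hj, rfl⟩)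

lemma decRearr_nonneg {z : ℕ → ℂ} {C : ℝ} (hC : ∀ j : ℕ, ‖z j‖ ≤ C)
    (n : ℕ) : 0 ≤ decRearr z n := by
  refine Real.sInf_nonneg ?_
  rintro t ⟨J, -, rfl⟩
  exact sSup_aux_nonneg hC J

lemma decRearr_antitone {z : ℕ → ℂ} {C : ℝ} (hC : ∀ j : ℕ, ‖z j‖ ≤ C)
    {a b : ℕ} (ha : 1 ≤ a) (hab : a ≤ b) :
    decRearr z b ≤ decRearr z a := by
  refine csInf_le_csInf ?_ ?_ ?_
  · refine ⟨0, ?_⟩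
    rintro t ⟨J, -, rfl⟩
    exact sSup_aux_nonneg hC J
  · exact ⟨_, ∅, by simp; omega, rfl⟩
  · rintro t ⟨J, hJ, rfl⟩
    exact ⟨J, lt_of_lt_of_le hJ hab, rfl⟩

lemma min_le_decRearr {z : ℕ → ℂ} {C : ℝ} (hC : ∀ j : ℕ, ‖z j‖ ≤ C)
    {S : Finset ℕ} {j₀ : ℕ} (hj₀ : j₀ ∈ S)
    (hmin : ∀ j ∈ S, ‖z j₀‖ ≤ ‖z j‖) :
    ‖z j₀‖ ≤ decRearr z S.card := by
  refine le_csInf ⟨_, ∅, by simpa using Finset.card_pos.2 ⟨j₀, hj₀⟩, rfl⟩ ?_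
  rintro t ⟨J, hJ, rfl⟩
  have hex : ∃ j ∈ S, j ∉ J := by
    by_contra h
    push_neg at h
    exact absurd (Finset.card_le_card fun x hx => h x hx) (not_le.2 hJ)
  obtain ⟨j₁, hj₁S, hj₁J⟩ := hex
  exact le_trans (hmin j₁ hj₁S) (le_csSup (bddAbove_aux hC J) ⟨j₁, hj₁J, rfl⟩)

lemma sum_rpow_le_sum_decRearr {z : ℕ → ℂ} {C : ℝ}
    (hC : ∀ j : ℕ, ‖z j‖ ≤ C) {r : ℝ} (hr : 0 ≤ r) :
    ∀ (n : ℕ) (S : Finset ℕ), S.card = n →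
      ∑ j ∈ S, ‖z j‖ ^ r ≤
        ∑ k ∈ Finset.range n, decRearr z (k + 1) ^ r := by
  intro n
  induction n with
  | zero => intro S hS; simp [Finset.card_eq_zero.1 hS]
  | succ n ih =>
    intro S hS
    have hSne : S.Nonempty := Finset.card_pos.1 (hS ▸ Nat.succ_pos n)
    obtain ⟨j₀, hj₀, hmin⟩ := S.exists_min_image (fun j => ‖z j‖) hSne
    have hmain : ‖z j₀‖ ≤ decRearr z (n + 1) := by
      have h := min_le_decRearr hC hj₀ hmin
      rwa [hS] at h
    have hsplit : ∑ j ∈ S, ‖z j‖ ^ r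
        = ‖z j₀‖ ^ r + ∑ j ∈ S.erase j₀, ‖z j‖ ^ r :=
      (Finset.add_sum_erase S _ hj₀).symm
    have hcard : (S.erase j₀).card = n := by
      rw [Finset.card_erase_of_mem hj₀, hS]; omega
    have hrec := ih (S.erase j₀) hcard
    rw [hsplit, Finset.sum_range_succ, add_comm (∑ k ∈ Finset.range n, _)]
    exact add_le_add (Real.rpow_le_rpow (norm_nonneg _) hmain hr) hrec

lemma summable_log_div_rpow {r : ℝ} (hr : 1 < r) (hr2 : r ≤ 2) :
    Summable (fun j : ℕ => Real.log ((j : ℝ) + 2) ^ (r - 1) / ((j : ℝ) + 1) ^ r) := by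
  have hbase : Summable (fun n : ℕ => (n : ℝ) ^ (-(r + 1) / 2)) :=
    Real.summable_nat_rpow.2 (by linarith)
  have hshift : Summable (fun j : ℕ => ((j : ℝ) + 1) ^ (-(r + 1) / 2)) := by
    have h := hbase.comp_injective Nat.succ_injective
    refine h.congr fun j => ?_
    have : ((Nat.succ j : ℕ) : ℝ) = (j : ℝ) + 1 := by push_cast; ring
    simp [Function.comp, this]
  refine Summable.of_nonneg_of_le (fun j => ?_) (fun j => ?_) (hshift.mul_left 4)
  · exact div_nonneg (Real.rpow_nonneg (Real.log_nonneg (by push_cast; linarith)) _)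
      (Real.rpow_nonneg (by positivity) _)
  · set x : ℝ := (j : ℝ) + 1 with hx
    have hx1 : (1 : ℝ) ≤ x := by rw [hx]; have := Nat.cast_nonneg (α := ℝ) j; linarith
    have hxpos : (0 : ℝ) < x := by linarith
    have hlog : Real.log ((j : ℝ) + 2) ≤ 2 * ((j : ℝ) + 2) ^ (1 / 2 : ℝ) := by
      have h := Real.log_le_rpow_div (x := (j : ℝ) + 2) (by positivity)
        (by norm_num : (0:ℝ) < 1/2)
      calc Real.log ((j : ℝ) + 2) ≤ ((j : ℝ) + 2) ^ (1/2 : ℝ) / (1/2) := h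
        _ = 2 * ((j : ℝ) + 2) ^ (1 / 2 : ℝ) := by ring
    have h2x : (j : ℝ) + 2 ≤ 2 * x := by
      have : (0:ℝ) ≤ (j:ℝ) := Nat.cast_nonneg j
      simp only [hx]; linarith
    have hxhalf : ((j : ℝ) + 2) ^ (1/2 : ℝ) ≤ (2 * x) ^ (1/2 : ℝ) :=
      Real.rpow_le_rpow (by positivity) h2x (by norm_num)
    have hsplit : (2 * x) ^ (1/2 : ℝ) = 2 ^ (1/2 : ℝ) * x ^ (1/2 : ℝ) :=
      Real.mul_rpow (by norm_num) hxpos.le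
    set c : ℝ := 2 * 2 ^ (1/2 : ℝ) with hc
    have hc1 : (1 : ℝ) ≤ c := by
      have : (1:ℝ) ≤ 2 ^ (1/2 : ℝ) := Real.one_le_rpow (by norm_num) (by norm_num)
      nlinarith
    have hc4 : c ≤ 4 := by
      have : (2:ℝ) ^ (1/2 : ℝ) ≤ 2 ^ (1:ℝ) :=
        Real.rpow_le_rpow_of_exponent_le (by norm_num) (by norm_num)
      rw [Real.rpow_one] at this
      simp only [hc]; nlinarith
    have hnum : Real.log ((j : ℝ) + 2) ^ (r - 1) ≤ (c * x ^ (1/2 : ℝ)) ^ (r - 1) := by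
      refine Real.rpow_le_rpow (Real.log_nonneg (by push_cast; linarith)) ?_ (by linarith)
      calc Real.log ((j : ℝ) + 2) ≤ 2 * ((j : ℝ) + 2) ^ (1/2 : ℝ) := hlog
        _ ≤ 2 * (2 ^ (1/2 : ℝ) * x ^ (1/2 : ℝ)) := by rw [← hsplit]; linarith
        _ = c * x ^ (1/2 : ℝ) := by rw [hc]; ring
    have hexpand : (c * x ^ (1/2 : ℝ)) ^ (r - 1)
        = c ^ (r - 1) * x ^ ((1/2 : ℝ) * (r - 1)) := by
      rw [Real.mul_rpow (by linarith) (Real.rpow_nonneg hxpos.le _),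
        ← Real.rpow_mul hxpos.le]
    have hcr : c ^ (r - 1) ≤ 4 := by
      have h1 : c ^ (r - 1) ≤ c ^ (1 : ℝ) :=
        Real.rpow_le_rpow_of_exponent_le hc1 (by linarith)
      rw [Real.rpow_one] at h1; linarith
    have hfinal : Real.log ((j : ℝ) + 2) ^ (r - 1) ≤ 4 * x ^ ((1/2 : ℝ) * (r - 1)) := by
      calc Real.log ((j : ℝ) + 2) ^ (r - 1) ≤ (c * x ^ (1/2 : ℝ)) ^ (r - 1) := hnum
        _ = c ^ (r - 1) * x ^ ((1/2 : ℝ) * (r - 1)) := hexpand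
        _ ≤ 4 * x ^ ((1/2 : ℝ) * (r - 1)) :=
            mul_le_mul_of_nonneg_right hcr (Real.rpow_nonneg hxpos.le _)
    calc Real.log ((j : ℝ) + 2) ^ (r - 1) / x ^ r
        ≤ 4 * x ^ ((1/2 : ℝ) * (r - 1)) / x ^ r := by
          gcongr
        _ = 4 * x ^ (-(r + 1) / 2) := by
          rw [mul_div_assoc, ← Real.rpow_sub hxpos]
          congr 1
          ring

/-- For `1 < r ≤ 2`, the series `∑_j log(j+1)^{r/r'} / j^r` converges, and the inclusion
`m_{Ψ_r} ↪ ℓ_r` is bounded with norm at most `(∑_j log(j+1)^{r/r'} / j^r)^{1/r}`: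
any bounded `z` with `∑_{l=1}^n z_l^* ≤ K log(n+1)^{1-1/r}` for all `n ≥ 1` lies in `ℓ_r` with
`∑_j |z_j|^r ≤ (∑_j log(j+1)^{r/r'} / j^r) · K^r`. -/
theorem marcinkiewicz_into_ellr (r r' : ℝ) (hr : 1 < r) (hr2 : r ≤ 2)
    (hconj : 1 / r + 1 / r' = 1) :
    Summable (fun j : ℕ => Real.log ((j : ℝ) + 2) ^ (r / r') / ((j : ℝ) + 1) ^ r) ∧
    ∀ (z : ℕ → ℂ) (K : ℝ), (∃ C : ℝ, ∀ j : ℕ, ‖z j‖ ≤ C) → 0 ≤ K →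
      (∀ n : ℕ, 1 ≤ n →
        ∑ l ∈ Finset.Icc 1 n, decRearr z l ≤ K * Real.log ((n : ℝ) + 1) ^ (1 - 1 / r)) →
      Summable (fun j : ℕ => ‖z j‖ ^ r) ∧
      ∑' j : ℕ, ‖z j‖ ^ r ≤
        (∑' j : ℕ, Real.log ((j : ℝ) + 2) ^ (r / r') / ((j : ℝ) + 1) ^ r) * K ^ r := by
  have hr0 : (0 : ℝ) < r := by linarith
  have hrr' : r / r' = r - 1 := by
    have h1 : 1 / r' = 1 - 1 / r := by linarith
    have : r / r' = r * (1 / r') := by ring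
    rw [this, h1]
    field_simp
  have hsum0 : Summable (fun j : ℕ =>
      Real.log ((j : ℝ) + 2) ^ (r / r') / ((j : ℝ) + 1) ^ r) := by
    simpa [hrr'] using summable_log_div_rpow hr hr2
  refine ⟨hsum0, ?_⟩
  intro z K hCex hK hIneq
  obtain ⟨C, hC⟩ := hCex
  set g : ℕ → ℝ := fun j => Real.log ((j : ℝ) + 2) ^ (r / r') / ((j : ℝ) + 1) ^ r with hg
  have hgnonneg : ∀ j, 0 ≤ g j := fun j =>
    div_nonneg (Real.rpow_nonneg (Real.log_nonneg (by push_cast; linarith)) _)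
      (Real.rpow_nonneg (by positivity) _)
  have hpt : ∀ k : ℕ, decRearr z (k + 1) ^ r ≤ g k * K ^ r := by
    intro k
    have hL : (0 : ℝ) ≤ Real.log ((k : ℝ) + 2) := Real.log_nonneg (by push_cast; linarith)
    have hcard : (Finset.Icc 1 (k + 1)).card = k + 1 := by rw [Nat.card_Icc]; omega
    have hdec : ((k : ℝ) + 1) * decRearr z (k + 1)
        ≤ K * Real.log ((k : ℝ) + 2) ^ (1 - 1 / r) := by
      have hs : ∑ l ∈ Finset.Icc 1 (k + 1), decRearr z (k + 1)
          ≤ ∑ l ∈ Finset.Icc 1 (k + 1), decRearr z l :=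
        Finset.sum_le_sum fun l hl =>
          decRearr_antitone hC (Finset.mem_Icc.1 hl).1 (Finset.mem_Icc.1 hl).2
      have hconst : ∑ l ∈ Finset.Icc 1 (k + 1), decRearr z (k + 1)
          = ((k : ℝ) + 1) * decRearr z (k + 1) := by
        rw [Finset.sum_const, hcard, nsmul_eq_mul]
        push_cast; ring
      have h2 := hIneq (k + 1) (Nat.succ_le_succ (Nat.zero_le k))
      have hcast : ((k + 1 : ℕ) : ℝ) + 1 = (k : ℝ) + 2 := by push_cast; ring
      rw [hcast] at h2
      calc ((k : ℝ) + 1) * decRearr z (k + 1)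
          = ∑ l ∈ Finset.Icc 1 (k + 1), decRearr z (k + 1) := hconst.symm
        _ ≤ ∑ l ∈ Finset.Icc 1 (k + 1), decRearr z l := hs
        _ ≤ K * Real.log ((k : ℝ) + 2) ^ (1 - 1 / r) := h2
    have hdiv : decRearr z (k + 1)
        ≤ K * Real.log ((k : ℝ) + 2) ^ (1 - 1 / r) / ((k : ℝ) + 1) := by
      rw [le_div_iff₀ (by positivity : (0:ℝ) < (k : ℝ) + 1)]
      linarith
    have hrpow := Real.rpow_le_rpow (decRearr_nonneg hC (k + 1)) hdiv hr0.le
    refine hrpow.trans_eq ?_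
    have hKL : 0 ≤ K * Real.log ((k : ℝ) + 2) ^ (1 - 1 / r) :=
      mul_nonneg hK (Real.rpow_nonneg hL _)
    rw [Real.div_rpow hKL (by positivity : (0:ℝ) ≤ (k : ℝ) + 1),
      Real.mul_rpow hK (Real.rpow_nonneg hL _), ← Real.rpow_mul hL]
    have hexp : (1 - 1 / r) * r = r / r' := by
      rw [hrr']; field_simp
    rw [hexp, hg]
    ring
  have hboundS : ∀ S : Finset ℕ,
      ∑ j ∈ S, ‖z j‖ ^ r ≤ (∑' j, g j) * K ^ r := by
    intro S
    calc ∑ j ∈ S, ‖z j‖ ^ r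
        ≤ ∑ k ∈ Finset.range S.card, decRearr z (k + 1) ^ r :=
          sum_rpow_le_sum_decRearr hC hr0.le S.card S rfl
      _ ≤ ∑ k ∈ Finset.range S.card, g k * K ^ r :=
          Finset.sum_le_sum fun k _ => hpt k
      _ ≤ ∑' k, g k * K ^ r :=
          Summable.sum_le_tsum _ (fun k _ => mul_nonneg (hgnonneg k) (Real.rpow_nonneg hK r))
            (hsum0.mul_right _)
      _ = (∑' j, g j) * K ^ r := tsum_mul_right
  have hsummable : Summable (fun j : ℕ => ‖z j‖ ^ r) :=
    summable_of_sum_range_le (fun n => Real.rpow_nonneg (norm_nonneg _) r)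
      (fun n => hboundS (Finset.range n))
  exact ⟨hsummable, Summable.tsum_le_of_sum_le hsummable hboundS⟩
end

section
/- Let $r > 1$. There exists a constant $C_r > 0$ such that for every $m \ge 2$, every $k \ge 1$, and all positive integers $n_1, \ldots, n_k$ with $n_1 + \cdots + n_k = m$, we have $\frac{m^{m/r}}{m!} \prod_{i=1}^{k} \frac{n_i!}{n_i^{n_i/r}} \le C_r\, m^{(e^{1/(r-1)}-1)/2}$. -/
open Finset Real Nat

lemma log_add_one_le (x : ℝ) (hx : 1 ≤ x) : 1 + Real.log x ≤ 2 * Real.sqrt x := by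
  have hx0 : (0:ℝ) < x := lt_of_lt_of_le one_pos hx
  have hs : (0:ℝ) < Real.sqrt x := Real.sqrt_pos.2 hx0
  have h1 : Real.log (Real.sqrt x) ≤ Real.sqrt x - 1 := Real.log_le_sub_one_of_pos hs
  have h2 : Real.log x = 2 * Real.log (Real.sqrt x) := by
    rw [Real.log_sqrt (le_of_lt hx0)]; ring

  linarith

lemma fact_upper' (n : ℕ) (hn : 1 ≤ n) :
    (n ! : ℝ) ≤ Real.exp 1 * Real.sqrt n * ((n : ℝ) / Real.exp 1) ^ n := by
  have h0 : (0:ℝ) < Real.sqrt (2 * n) * ((n : ℝ) / Real.exp 1) ^ n := by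
    apply mul_pos
    · apply Real.sqrt_pos.2; positivity
    · apply pow_pos; positivity
  have h1 : Stirling.stirlingSeq n ≤ Stirling.stirlingSeq 1 := by
    obtain ⟨j, rfl⟩ := Nat.exists_eq_add_of_le hn
    simpa [Nat.add_comm, Nat.succ_eq_add_one] using Stirling.stirlingSeq'_antitone (Nat.zero_le j)
  rw [Stirling.stirlingSeq_one] at h1
  have h2 : (n ! : ℝ) ≤ Real.exp 1 / Real.sqrt 2 * (Real.sqrt (2 * n) * ((n : ℝ) / Real.exp 1) ^ n) := by
    have := (div_le_iff₀ h0).1 h1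
    simpa [Stirling.stirlingSeq] using this
  calc (n ! : ℝ) ≤ _ := h2
    _ = Real.exp 1 * Real.sqrt n * ((n : ℝ) / Real.exp 1) ^ n := by
        rw [Real.sqrt_mul (by norm_num : (0:ℝ) ≤ 2)]
        have h2' : Real.sqrt 2 ≠ 0 := by positivity
        field_simp

lemma fact_lower' (n : ℕ) :
    Real.sqrt (2 * n) * ((n : ℝ) / Real.exp 1) ^ n ≤ (n ! : ℝ) := by
  rcases Nat.eq_zero_or_pos n with h | h
  · subst h; simp
  have h1 : Real.sqrt π ≤ Stirling.stirlingSeq n := by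
    obtain ⟨j, rfl⟩ := Nat.exists_eq_add_of_le h
    have ht : Filter.Tendsto (Stirling.stirlingSeq ∘ Nat.succ) Filter.atTop (nhds (Real.sqrt π)) :=
      Stirling.tendsto_stirlingSeq_sqrt_pi.comp (Filter.tendsto_add_atTop_nat 1)
    have := Stirling.stirlingSeq'_antitone.le_of_tendsto ht j
    simpa [Nat.succ_eq_add_one, Nat.add_comm] using this
  have hpi : (1:ℝ) ≤ Real.sqrt π := by
    rw [show (1:ℝ) = Real.sqrt 1 by simp]
    exact Real.sqrt_le_sqrt (by linarith [Real.pi_gt_three])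
  have h0 : (0:ℝ) < Real.sqrt (2 * n) * ((n : ℝ) / Real.exp 1) ^ n := by
    apply mul_pos
    · apply Real.sqrt_pos.2; positivity
    · apply pow_pos; positivity
  have h2 := le_trans hpi h1
  rw [Stirling.stirlingSeq, le_div_iff₀ h0, one_mul] at h2
  exact h2

lemma key_small' (a x y : ℝ) (ha : 0 < a) (hx : 1 ≤ x) (hxy : 2 * x ≤ y)
    (hy1 : 4 / a ≤ Real.log y) (hy2 : 2 / a ≤ Real.sqrt (Real.sqrt y) * Real.log 2) :
    Real.exp 1 * x * (x / y) ^ (a * x) ≤ 1 := by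
  have hx0 : (0:ℝ) < x := lt_of_lt_of_le one_pos hx
  have hy0 : (0:ℝ) < y := by linarith
  have hq : (0:ℝ) < x / y := by positivity
  have key : 1 + Real.log x ≤ a * x * Real.log (y / x) := by
    have hb := log_add_one_le x hx
    have hsx : (1:ℝ) ≤ Real.sqrt x := by
      rw [show (1:ℝ) = Real.sqrt 1 by simp]; exact Real.sqrt_le_sqrt hx
    have hsq : Real.sqrt x * Real.sqrt x = x := Real.mul_self_sqrt (le_of_lt hx0)
    rcases le_or_gt x (Real.sqrt y) with hc | hc
    · have h1 : Real.sqrt y ≤ y / x := by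
        rw [le_div_iff₀ hx0]
        calc Real.sqrt y * x ≤ Real.sqrt y * Real.sqrt y := by nlinarith [Real.sqrt_nonneg y]
          _ = y := Real.mul_self_sqrt (le_of_lt hy0)
      have h2 : Real.log (Real.sqrt y) ≤ Real.log (y / x) :=
        Real.log_le_log (Real.sqrt_pos.2 hy0) h1
      rw [Real.log_sqrt (le_of_lt hy0)] at h2
      have ha' : 4 / a = 2 * (2 / a) := by ring
      have h3 : 2 / a ≤ Real.log (y / x) := by linarith
      have h4 : 2 * x ≤ a * x * Real.log (y / x) := by
        have := mul_le_mul_of_nonneg_left h3 (le_of_lt (mul_pos ha hx0))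
        calc 2 * x = a * x * (2 / a) := by field_simp
          _ ≤ _ := this
      have h5 : Real.sqrt x ≤ x := by nlinarith
      linarith
    · have h1 : Real.log 2 ≤ Real.log (y / x) := by
        apply Real.log_le_log two_pos
        rw [le_div_iff₀ hx0]; linarith
      have h2 : Real.sqrt (Real.sqrt y) ≤ Real.sqrt x := Real.sqrt_le_sqrt (le_of_lt hc)
      have hlog2 : (0:ℝ) < Real.log 2 := Real.log_pos (by norm_num)
      have h3 : 2 / a ≤ Real.sqrt x * Real.log 2 := by
        calc 2 / a ≤ Real.sqrt (Real.sqrt y) * Real.log 2 := hy2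
          _ ≤ Real.sqrt x * Real.log 2 := by nlinarith
      have h4 : 2 * Real.sqrt x ≤ a * x * Real.log (y / x) := by
        have h5 : 2 ≤ a * (Real.sqrt x * Real.log 2) := by
          rw [← div_le_iff₀' ha]; exact h3
        have h6 : a * (Real.sqrt x * Real.log 2) * Real.sqrt x = a * x * Real.log 2 := by
          linear_combination a * Real.log 2 * hsq
        calc 2 * Real.sqrt x ≤ (a * (Real.sqrt x * Real.log 2)) * Real.sqrt x := by
              nlinarith [Real.sqrt_nonneg x]
          _ = a * x * Real.log 2 := h6
          _ ≤ a * x * Real.log (y / x) := by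
              exact mul_le_mul_of_nonneg_left h1 (by positivity)
      linarith
  have expand : Real.exp 1 * x * (x / y) ^ (a * x) =
      Real.exp (1 + Real.log x + a * x * Real.log (x / y)) := by
    rw [Real.rpow_def_of_pos hq, Real.exp_add, Real.exp_add, Real.exp_log hx0]
    ring_nf
  rw [expand]
  calc Real.exp (1 + Real.log x + a * x * Real.log (x / y)) ≤ Real.exp 0 := by
        apply Real.exp_le_exp.2
        have hlxy : Real.log (x / y) = -Real.log (y / x) := by
          rw [Real.log_div (ne_of_gt hx0) (ne_of_gt hy0),
            Real.log_div (ne_of_gt hy0) (ne_of_gt hx0)]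
          ring
        rw [hlxy]
        linarith
    _ = 1 := Real.exp_zero

lemma per_factor' (r : ℝ) (hr : 1 < r) (m n : ℕ) (hm : 1 ≤ m) (hn : 1 ≤ n) :
    Real.exp n * (m:ℝ) ^ (-((1 - 1/r) * (n:ℝ))) * ((n ! : ℝ) / (n:ℝ) ^ ((n:ℝ)/r)) ≤
    Real.exp 1 * Real.sqrt n * ((n:ℝ)/(m:ℝ)) ^ ((1 - 1/r) * (n:ℝ)) := by
  have hA0 : (0:ℝ) < n := by exact_mod_cast hn
  have hB0 : (0:ℝ) < m := by exact_mod_cast hm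
  have hAr : (0:ℝ) < (n:ℝ) ^ ((n:ℝ)/r) := Real.rpow_pos_of_pos hA0 _
  have step1 : Real.exp n * (m:ℝ) ^ (-((1 - 1/r) * (n:ℝ))) * ((n ! : ℝ) / (n:ℝ) ^ ((n:ℝ)/r)) ≤
      Real.exp n * (m:ℝ) ^ (-((1 - 1/r) * (n:ℝ))) *
        ((Real.exp 1 * Real.sqrt n * ((n : ℝ) / Real.exp 1) ^ n) / (n:ℝ) ^ ((n:ℝ)/r)) := by
    gcongr
    exact fact_upper' n hn
  refine le_trans step1 (le_of_eq ?_)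
  have hsplit : (n:ℝ) ^ ((n:ℝ)) = (n:ℝ) ^ ((1 - 1/r) * (n:ℝ)) * (n:ℝ) ^ ((n:ℝ)/r) := by
    rw [← Real.rpow_add hA0]; congr 1; ring
  have hpow : ((n : ℝ) / Real.exp 1) ^ n = (n:ℝ) ^ ((n:ℝ)) / Real.exp n := by
    rw [div_pow, Real.exp_one_pow, ← Real.rpow_natCast]
  rw [hpow, hsplit, Real.div_rpow hA0.le hB0.le, Real.rpow_neg hB0.le]
  have h1 : ((m:ℝ) ^ ((1 - 1/r) * (n:ℝ))) ≠ 0 := ne_of_gt (Real.rpow_pos_of_pos hB0 _)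
  have h2 : Real.exp (n:ℝ) ≠ 0 := Real.exp_ne_zero _
  field_simp

lemma sqrt_le_self' (x : ℝ) (hx : 1 ≤ x) : Real.sqrt x ≤ x := by
  nlinarith [Real.sq_sqrt (by linarith : (0:ℝ) ≤ x), Real.sqrt_nonneg x,
    Real.sqrt_le_sqrt hx, Real.sqrt_one]

lemma prodG_eq (a : ℝ) (k m : ℕ) (n : Fin k → ℕ) (hm0 : (0:ℝ) < m)
    (hsumR : ∑ i, (n i : ℝ) = (m:ℝ)) :
    ∏ i, (Real.exp (n i) * (m:ℝ) ^ (-(a * (n i : ℝ)))) =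
      Real.exp (m:ℝ) * (m:ℝ) ^ (-(a * (m:ℝ))) := by
  have h1 : ∀ i ∈ Finset.univ, Real.exp (n i : ℝ) * (m:ℝ) ^ (-(a * (n i : ℝ))) =
      Real.exp ((1 + (-(a * Real.log (m:ℝ)))) * (n i : ℝ)) := by
    intro i _
    rw [Real.rpow_def_of_pos hm0, ← Real.exp_add]
    congr 1
    ring
  rw [Finset.prod_congr rfl h1, ← Real.exp_sum, ← Finset.mul_sum, hsumR,
    Real.rpow_def_of_pos hm0, ← Real.exp_add]
  congr 1
  ring

lemma step1' (r : ℝ) (hr : 1 < r) (m : ℕ) (hm : 1 ≤ m) :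
    (m:ℝ) ^ ((m:ℝ)/r) / (m ! : ℝ) ≤
      (Real.exp (m:ℝ) * (m:ℝ) ^ (-((1 - 1/r) * (m:ℝ)))) / Real.sqrt (2*(m:ℝ)) := by
  have hm0 : (0:ℝ) < m := by exact_mod_cast hm
  have hden : (0:ℝ) < Real.sqrt (2 * m) * ((m : ℝ) / Real.exp 1) ^ m := by
    apply mul_pos (Real.sqrt_pos.2 (by positivity))
    apply pow_pos; positivity
  have h1 : (m : ℝ) ^ ((m : ℝ) / r) / (m ! : ℝ) ≤
      (m : ℝ) ^ ((m : ℝ) / r) / (Real.sqrt (2 * m) * ((m : ℝ) / Real.exp 1) ^ m) := by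
    gcongr
    exact fact_lower' m
  refine le_trans h1 (le_of_eq ?_)
  have hsplit : (m:ℝ) ^ ((m:ℝ)) = (m:ℝ) ^ ((1 - 1/r) * (m:ℝ)) * (m:ℝ) ^ ((m:ℝ)/r) := by
    rw [← Real.rpow_add hm0]; congr 1; field_simp; ring
  have hpow : ((m : ℝ) / Real.exp 1) ^ (m:ℕ) = (m:ℝ) ^ ((m:ℝ)) / Real.exp (m:ℝ) := by
    rw [div_pow, Real.exp_one_pow, ← Real.rpow_natCast]
  rw [hpow, hsplit, Real.rpow_neg hm0.le]
  have h2 : ((m:ℝ) ^ ((1 - 1/r) * (m:ℝ))) ≠ 0 := ne_of_gt (Real.rpow_pos_of_pos hm0 _)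
  have h3 : Real.exp (m:ℝ) ≠ 0 := Real.exp_ne_zero _
  have h4 : Real.sqrt (2*(m:ℝ)) ≠ 0 := ne_of_gt (Real.sqrt_pos.2 (by positivity))
  field_simp

lemma prodF_le (a : ℝ) (ha : 0 < a) (k m : ℕ) (hk : 1 ≤ k) (n : Fin k → ℕ)
    (hn : ∀ i, 1 ≤ n i) (hm : 1 ≤ m) (hni : ∀ i, n i ≤ m) (hsum : ∑ i, n i = m)
    (hy1 : 4 / a ≤ Real.log (m:ℝ))
    (hy2 : 2 / a ≤ Real.sqrt (Real.sqrt (m:ℝ)) * Real.log 2) :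
    ∏ i, (Real.exp 1 * Real.sqrt (n i) * ((n i : ℝ)/(m:ℝ)) ^ (a * (n i : ℝ))) ≤
      Real.exp 1 * Real.sqrt (m:ℝ) := by
  have hm0 : (0:ℝ) < m := by exact_mod_cast lt_of_lt_of_le one_pos hm
  set F : Fin k → ℝ := fun i =>
    Real.exp 1 * Real.sqrt (n i) * ((n i : ℝ)/(m:ℝ)) ^ (a * (n i : ℝ)) with hF_def
  have hFnn : ∀ i, 0 ≤ F i := fun i => by
    rw [hF_def]
    have : (0:ℝ) ≤ ((n i : ℝ)/(m:ℝ)) ^ (a * (n i : ℝ)) := Real.rpow_nonneg (by positivity) _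
    positivity
  have hne : Nonempty (Fin k) := ⟨⟨0, hk⟩⟩
  obtain ⟨i₀, -, hmax⟩ := Finset.exists_max_image Finset.univ n Finset.univ_nonempty
  have herase : ∏ i ∈ Finset.univ.erase i₀, F i ≤ 1 := by
    apply Finset.prod_le_one (fun i _ => hFnn i)
    intro i hi
    have h2n : 2 * n i ≤ m := by
      have h3 : n i + n i₀ ≤ m := by
        rw [← hsum, ← Finset.add_sum_erase Finset.univ n (Finset.mem_univ i₀)]
        have h4 : n i ≤ ∑ j ∈ Finset.univ.erase i₀, n j :=
          Finset.single_le_sum (fun j _ => Nat.zero_le _) hi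
        omega
      have h5 := hmax i (Finset.mem_univ i)
      omega
    have hxn : (1:ℝ) ≤ (n i:ℝ) := by exact_mod_cast hn i
    have hsn : Real.sqrt (n i:ℝ) ≤ (n i:ℝ) := sqrt_le_self' _ hxn
    have hpnn : (0:ℝ) ≤ ((n i : ℝ)/(m:ℝ)) ^ (a * (n i : ℝ)) :=
      Real.rpow_nonneg (by positivity) _
    have h5 : F i ≤ Real.exp 1 * (n i:ℝ) * ((n i : ℝ)/(m:ℝ)) ^ (a * (n i : ℝ)) := by
      rw [hF_def]
      exact mul_le_mul_of_nonneg_right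
        (mul_le_mul_of_nonneg_left hsn (Real.exp_pos 1).le) hpnn
    refine le_trans h5 (key_small' a (n i) (m:ℝ) ha hxn ?_ hy1 hy2)
    exact_mod_cast h2n
  have hbig : F i₀ ≤ Real.exp 1 * Real.sqrt (m:ℝ) := by
    rw [hF_def]
    have h1 : ((n i₀ : ℝ)/(m:ℝ)) ^ (a * (n i₀ : ℝ)) ≤ 1 := by
      apply Real.rpow_le_one (by positivity) ?_ (by positivity)
      rw [div_le_one hm0]
      exact_mod_cast hni i₀
    calc Real.exp 1 * Real.sqrt (n i₀) * ((n i₀ : ℝ)/(m:ℝ)) ^ (a * (n i₀ : ℝ))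
        ≤ Real.exp 1 * Real.sqrt (n i₀) * 1 := by
          apply mul_le_mul_of_nonneg_left h1 (by positivity)
      _ = Real.exp 1 * Real.sqrt (n i₀) := mul_one _
      _ ≤ Real.exp 1 * Real.sqrt (m:ℝ) := by
          apply mul_le_mul_of_nonneg_left ?_ (Real.exp_pos 1).le
          exact Real.sqrt_le_sqrt (by exact_mod_cast hni i₀)
  calc ∏ i, F i = F i₀ * ∏ i ∈ Finset.univ.erase i₀, F i :=
        (Finset.mul_prod_erase Finset.univ F (Finset.mem_univ i₀)).symm
    _ ≤ F i₀ * 1 := mul_le_mul_of_nonneg_left herase (hFnn i₀)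
    _ = F i₀ := mul_one _
    _ ≤ Real.exp 1 * Real.sqrt (m:ℝ) := hbig

lemma main_large (r : ℝ) (hr : 1 < r) (m k : ℕ) (hm2 : 2 ≤ m) (hk : 1 ≤ k)
    (n : Fin k → ℕ) (hn : ∀ i, 1 ≤ n i) (hsum : ∑ i, n i = m)
    (hni : ∀ i, n i ≤ m)
    (hy1 : 4 / (1 - 1/r) ≤ Real.log (m:ℝ))
    (hy2 : 2 / (1 - 1/r) ≤ Real.sqrt (Real.sqrt (m:ℝ)) * Real.log 2) :
    (m : ℝ) ^ ((m : ℝ) / r) / (m ! : ℝ) *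
      ∏ i, ((n i)! : ℝ) / ((n i : ℝ) ^ ((n i : ℝ) / r)) ≤ Real.exp 1 := by
  have hr0 : (0:ℝ) < r := by linarith
  have ha : (0:ℝ) < 1 - 1/r := by
    have h1 : 1/r < 1 := by rw [div_lt_one hr0]; exact hr
    linarith
  have hm1n : 1 ≤ m := le_trans one_le_two hm2
  have hm0 : (0:ℝ) < m := by exact_mod_cast hm1n
  have hsumR : ∑ i, (n i : ℝ) = (m:ℝ) := by exact_mod_cast congrArg (Nat.cast : ℕ → ℝ) hsum
  have hPnn : (0:ℝ) ≤ ∏ i, ((n i)! : ℝ) / ((n i : ℝ) ^ ((n i : ℝ) / r)) :=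
    Finset.prod_nonneg (fun i _ => by positivity)
  have step1 := step1' r hr m hm1n
  have h1 := mul_le_mul_of_nonneg_right step1 hPnn
  refine le_trans h1 ?_
  have h2 : (Real.exp (m:ℝ) * (m:ℝ) ^ (-((1 - 1/r) * (m:ℝ)))) / Real.sqrt (2*(m:ℝ)) *
      (∏ i, ((n i)! : ℝ) / ((n i : ℝ) ^ ((n i : ℝ) / r))) =
      (∏ i, (Real.exp (n i) * (m:ℝ) ^ (-((1 - 1/r) * (n i : ℝ))) *
        (((n i)! : ℝ) / ((n i : ℝ) ^ ((n i : ℝ) / r))))) / Real.sqrt (2*(m:ℝ)) := by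
    rw [Finset.prod_mul_distrib, prodG_eq (1 - 1/r) k m n hm0 hsumR]
    ring
  rw [h2]
  have h3 : (∏ i, (Real.exp (n i) * (m:ℝ) ^ (-((1 - 1/r) * (n i : ℝ))) *
      (((n i)! : ℝ) / ((n i : ℝ) ^ ((n i : ℝ) / r))))) ≤
      ∏ i, (Real.exp 1 * Real.sqrt (n i) * ((n i : ℝ)/(m:ℝ)) ^ ((1 - 1/r) * (n i : ℝ))) := by
    apply Finset.prod_le_prod
    · intro i _
      have : (0:ℝ) ≤ (m:ℝ) ^ (-((1 - 1/r) * (n i : ℝ))) := Real.rpow_nonneg hm0.le _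
      positivity
    · intro i _
      exact per_factor' r hr m (n i) hm1n (hn i)
  have h4 := prodF_le (1 - 1/r) ha k m hk n hn hm1n hni hsum hy1 hy2
  have hsd : (0:ℝ) < Real.sqrt (2*(m:ℝ)) := Real.sqrt_pos.2 (by positivity)
  have h5 : (∏ i, (Real.exp (n i) * (m:ℝ) ^ (-((1 - 1/r) * (n i : ℝ))) *
      (((n i)! : ℝ) / ((n i : ℝ) ^ ((n i : ℝ) / r))))) / Real.sqrt (2*(m:ℝ)) ≤
      (Real.exp 1 * Real.sqrt (m:ℝ)) / Real.sqrt (2*(m:ℝ)) :=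
    div_le_div_of_nonneg_right (le_trans h3 h4) hsd.le
  refine le_trans h5 ?_
  have h6 : Real.sqrt (2*(m:ℝ)) = Real.sqrt 2 * Real.sqrt (m:ℝ) :=
    Real.sqrt_mul (by norm_num) _
  have hsm : (0:ℝ) < Real.sqrt (m:ℝ) := Real.sqrt_pos.2 hm0
  rw [h6]
  have h8 : Real.exp 1 * Real.sqrt (m:ℝ) / (Real.sqrt 2 * Real.sqrt (m:ℝ)) =
      Real.exp 1 / Real.sqrt 2 := by
    field_simp
  rw [h8]
  have h9 : (1:ℝ) ≤ Real.sqrt 2 := by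
    rw [show (1:ℝ) = Real.sqrt 1 by simp]
    exact Real.sqrt_le_sqrt (by norm_num)
  exact div_le_self (Real.exp_pos 1).le h9

/-- For `r > 1` there is `C_r > 0` such that for every `m ≥ 2`, `k ≥ 1` and positive integers
`n_1, …, n_k` with `n_1 + ⋯ + n_k = m`,
`(m^{m/r} / m!) ∏_i (n_i! / n_i^{n_i/r}) ≤ C_r m^{(e^{1/(r-1)} - 1)/2}`. -/
theorem factorial_multiindex_bound (r : ℝ) (hr : 1 < r) :
    ∃ C : ℝ, 0 < C ∧ ∀ (m k : ℕ), 2 ≤ m → 1 ≤ k → ∀ n : Fin k → ℕ,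
      (∀ i, 1 ≤ n i) → (∑ i, n i = m) →
      (m : ℝ) ^ ((m : ℝ) / r) / (Nat.factorial m : ℝ) *
        ∏ i, (Nat.factorial (n i) : ℝ) / ((n i : ℝ) ^ ((n i : ℝ) / r)) ≤
      C * (m : ℝ) ^ ((Real.exp (1 / (r - 1)) - 1) / 2) := by
  have hr0 : (0:ℝ) < r := by linarith
  have ha : (0:ℝ) < 1 - 1/r := by
    have h1 : 1/r < 1 := by rw [div_lt_one hr0]; exact hr
    linarith
  have hlog2 : (0:ℝ) < Real.log 2 := Real.log_pos (by norm_num)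
  set q : ℝ := 2 / ((1 - 1/r) * Real.log 2) with hq_def
  have hq0 : 0 < q := by positivity
  obtain ⟨M₁, hM₁⟩ := exists_nat_ge (Real.exp (4/(1 - 1/r)))
  obtain ⟨M₂, hM₂⟩ := exists_nat_ge ((q*q)*(q*q))
  set M : ℕ := max M₁ M₂ with hM_def
  set D : ℝ := ((M:ℝ))^M * ((Nat.factorial M : ℝ))^M with hD_def
  have hD0 : 0 ≤ D := by positivity
  refine ⟨D + Real.exp 1, by positivity, ?_⟩
  intro m k hm2 hk n hn hsum
  have hm1n : 1 ≤ m := le_trans one_le_two hm2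
  have hm1 : (1:ℝ) ≤ (m:ℝ) := by exact_mod_cast hm1n
  have hm0 : (0:ℝ) < (m:ℝ) := lt_of_lt_of_le one_pos hm1
  have hbeta : 0 ≤ (Real.exp (1/(r-1)) - 1)/2 := by
    have h1 : (1:ℝ) ≤ Real.exp (1/(r-1)) :=
      Real.one_le_exp (div_nonneg zero_le_one (by linarith))
    linarith
  have hpow1 : (1:ℝ) ≤ (m:ℝ) ^ ((Real.exp (1/(r-1)) - 1)/2) := by
    calc (1:ℝ) = (m:ℝ) ^ (0:ℝ) := (Real.rpow_zero _).symm
      _ ≤ _ := Real.rpow_le_rpow_of_exponent_le hm1 hbeta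
  have hni : ∀ i, n i ≤ m := by
    intro i
    rw [← hsum]
    exact Finset.single_le_sum (fun j _ => Nat.zero_le _) (Finset.mem_univ i)
  have hkm : k ≤ m := by
    have h1 : ∑ _i : Fin k, 1 ≤ ∑ i, n i := Finset.sum_le_sum (fun i _ => hn i)
    simpa [hsum] using h1
  have hPnn : (0:ℝ) ≤ ∏ i, (Nat.factorial (n i) : ℝ) / ((n i : ℝ) ^ ((n i : ℝ) / r)) :=
    Finset.prod_nonneg (fun i _ => by positivity)
  suffices h : (m : ℝ) ^ ((m : ℝ) / r) / (Nat.factorial m : ℝ) *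
      ∏ i, (Nat.factorial (n i) : ℝ) / ((n i : ℝ) ^ ((n i : ℝ) / r)) ≤ D + Real.exp 1 by
    calc (m : ℝ) ^ ((m : ℝ) / r) / (Nat.factorial m : ℝ) *
        ∏ i, (Nat.factorial (n i) : ℝ) / ((n i : ℝ) ^ ((n i : ℝ) / r))
        ≤ D + Real.exp 1 := h
      _ = (D + Real.exp 1) * 1 := (mul_one _).symm
      _ ≤ _ := mul_le_mul_of_nonneg_left hpow1 (by positivity)
  rcases le_total m M with hsmall | hlarge
  · -- small case : crude bound by D
    have hQ : (m : ℝ) ^ ((m : ℝ) / r) / (Nat.factorial m : ℝ) ≤ ((M:ℝ))^M := by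
      have hfm : (1:ℝ) ≤ (Nat.factorial m : ℝ) := by
        exact_mod_cast Nat.one_le_iff_ne_zero.2 (Nat.factorial_ne_zero m)
      calc (m : ℝ) ^ ((m : ℝ) / r) / (Nat.factorial m : ℝ)
          ≤ (m : ℝ) ^ ((m : ℝ) / r) := div_le_self (by positivity) hfm
        _ ≤ (m : ℝ) ^ ((m : ℝ)) :=
            Real.rpow_le_rpow_of_exponent_le hm1 (div_le_self (by positivity) (le_of_lt hr))
        _ = (m : ℝ) ^ (m : ℕ) := Real.rpow_natCast _ _
        _ ≤ (M : ℝ) ^ (M : ℕ) := by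
            have h1 : m ^ m ≤ M ^ M :=
              le_trans (Nat.pow_le_pow_left hsmall m)
                (Nat.pow_le_pow_right (le_trans hm1n hsmall) hsmall)
            calc ((m:ℝ))^(m:ℕ) = ((m^m : ℕ) : ℝ) := by push_cast; ring
              _ ≤ ((M^M : ℕ) : ℝ) := by exact_mod_cast h1
              _ = ((M:ℝ))^(M:ℕ) := by push_cast; ring
    have hP : ∏ i, (Nat.factorial (n i) : ℝ) / ((n i : ℝ) ^ ((n i : ℝ) / r)) ≤
        ((Nat.factorial M : ℝ))^M := by
      have hMf1 : (1:ℝ) ≤ (Nat.factorial M : ℝ) := by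
        exact_mod_cast Nat.one_le_iff_ne_zero.2 (Nat.factorial_ne_zero M)
      calc ∏ i, (Nat.factorial (n i) : ℝ) / ((n i : ℝ) ^ ((n i : ℝ) / r))
          ≤ ∏ _i : Fin k, (Nat.factorial M : ℝ) := by
            apply Finset.prod_le_prod (fun i _ => by positivity)
            intro i _
            have hni1 : (1:ℝ) ≤ (n i : ℝ) := by exact_mod_cast hn i
            have h1 : (1:ℝ) ≤ (n i:ℝ)^((n i:ℝ)/r) := by
              calc (1:ℝ) = (n i:ℝ) ^ (0:ℝ) := (Real.rpow_zero _).symm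
                _ ≤ _ := Real.rpow_le_rpow_of_exponent_le hni1 (by positivity)
            calc (Nat.factorial (n i) : ℝ) / ((n i : ℝ) ^ ((n i : ℝ) / r))
                ≤ (Nat.factorial (n i) : ℝ) := div_le_self (by positivity) h1
              _ ≤ (Nat.factorial M : ℝ) := by
                  exact_mod_cast Nat.factorial_le (le_trans (hni i) hsmall)
        _ = ((Nat.factorial M : ℝ))^k := by
            rw [Finset.prod_const, Finset.card_univ, Fintype.card_fin]
        _ ≤ ((Nat.factorial M : ℝ))^M :=
            pow_le_pow_right₀ hMf1 (le_trans hkm hsmall)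
    calc (m : ℝ) ^ ((m : ℝ) / r) / (Nat.factorial m : ℝ) *
        ∏ i, (Nat.factorial (n i) : ℝ) / ((n i : ℝ) ^ ((n i : ℝ) / r))
        ≤ ((M:ℝ))^M * ((Nat.factorial M : ℝ))^M :=
          mul_le_mul hQ hP hPnn (by positivity)
      _ = D := rfl
      _ ≤ D + Real.exp 1 := by
          have := (Real.exp_pos 1).le
          linarith
  · -- large case
    have hMm : (M:ℝ) ≤ (m:ℝ) := by exact_mod_cast hlarge
    have hy1 : 4/(1 - 1/r) ≤ Real.log (m:ℝ) := by
      have h1 : Real.exp (4/(1 - 1/r)) ≤ (m:ℝ) :=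
        le_trans hM₁ (le_trans (by exact_mod_cast le_max_left M₁ M₂) hMm)
      have h2 := Real.log_le_log (Real.exp_pos _) h1
      rwa [Real.log_exp] at h2
    have hy2 : 2/(1 - 1/r) ≤ Real.sqrt (Real.sqrt (m:ℝ)) * Real.log 2 := by
      have h1 : ((q*q)*(q*q) : ℝ) ≤ (m:ℝ) :=
        le_trans hM₂ (le_trans (by exact_mod_cast le_max_right M₁ M₂) hMm)
      have h2 : q*q ≤ Real.sqrt (m:ℝ) := by
        calc q*q = Real.sqrt ((q*q)*(q*q)) := (Real.sqrt_mul_self (by positivity)).symm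
          _ ≤ _ := Real.sqrt_le_sqrt h1
      have h3 : q ≤ Real.sqrt (Real.sqrt (m:ℝ)) := by
        calc q = Real.sqrt (q*q) := (Real.sqrt_mul_self hq0.le).symm
          _ ≤ _ := Real.sqrt_le_sqrt h2
      have h4 : q * Real.log 2 = 2/(1 - 1/r) := by
        rw [hq_def, div_mul_eq_mul_div, mul_div_mul_right _ _ hlog2.ne']
      calc 2/(1 - 1/r) = q * Real.log 2 := h4.symm
        _ ≤ _ := mul_le_mul_of_nonneg_right h3 hlog2.le
    have hmain := main_large r hr m k hm2 hk n hn hsum hni hy1 hy2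
    refine le_trans hmain ?_
    linarith
end

section
/- Let $1 < r \le 2$, $m \ge 3$, set $q = (mr')'$ (so $1/q = 1 - 1/(mr')$), and let $1 \le k \le m-2$. For decreasing sequences $z^{(i_1)}, \ldots, z^{(i_k)} \in \mathbb{C}^n$ (given via their decreasing rearrangements) and $1 \le t \le n$: $\sum_{t \le j_1 \le \cdots \le j_k \le n} z^{(i_1)*}_{j_1} \cdots z^{(i_k)*}_{j_k}\, j_k^{1/r - 1/q} \le \Big(\prod_{l=1}^{k}\big(\tfrac{mr'}{m-l-1} + \tfrac{1}{t}\big)\Big)\, t^{\frac{k+1}{q'} - \frac{1}{r'}} \prod_{l=1}^{k}\|z^{(i_l)}\|_{\ell_{q,\infty}}$. -/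
open Finset
open scoped Classical

/-! Bounding `w_l(j)` by `‖w_l‖_{q,∞} j^{-1/q}` reduces the claim to the model weights
`w_l(j) = j^{-1/q}`. With `δ = 1/(mr')`, the model sum over `a ≤ j_1 ≤ ⋯ ≤ j_k ≤ n` is at most
`C_k a^{-(m-k-1)δ}`, by induction on `k`: peeling off the smallest index `j_1` leaves the tail sum
`∑_{j ≥ a} j^{-1-ε}` with `ε = (m-k-1)δ`, which the integral test bounds by `(1/ε + 1/a) a^{-ε}`. -/

theorem sum_Icc_rpow_neg_one_add_le {ε : ℝ} (hε : 0 < ε) {a : ℕ} (ha : 1 ≤ a) (n : ℕ) :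
    ∑ j ∈ Icc a n, (j : ℝ) ^ (-(1 + ε)) ≤ (1 / ε + 1 / a) * (a : ℝ) ^ (-ε) := by
  have ha0 : (0 : ℝ) < a := by exact_mod_cast ha
  rcases lt_or_ge n a with hna | han
  · rw [Icc_eq_empty_of_lt hna, sum_empty]
    positivity
  have htail : ∑ j ∈ Ioc a n, (j : ℝ) ^ (-(1 + ε)) ≤ ∫ x in (a : ℝ)..n, x ^ (-(1 + ε)) := by
    rw [show Ioc a n = Ico (a + 1) (n + 1) by ext; simp,
      ← sum_Ico_add' (fun j : ℕ => (j : ℝ) ^ (-(1 + ε)))]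
    refine AntitoneOn.sum_le_integral_Ico (f := fun x : ℝ => x ^ (-(1 + ε))) han
      fun x hx y _ hxy => ?_
    exact Real.rpow_le_rpow_of_nonpos (ha0.trans_le hx.1) hxy (by linarith)
  have hint : ∫ x in (a : ℝ)..n, x ^ (-(1 + ε)) ≤ (a : ℝ) ^ (-ε) / ε := by
    have h0 : (0 : ℝ) ∉ Set.uIcc (a : ℝ) n := by
      rw [Set.uIcc_of_le (by exact_mod_cast han)]
      exact fun h => ha0.not_ge h.1
    rw [integral_rpow (Or.inr ⟨by linarith, h0⟩), show -(1 + ε) + 1 = -ε by ring,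
      div_neg, ← neg_div, neg_sub]
    gcongr
    exact sub_le_self _ (Real.rpow_nonneg (Nat.cast_nonneg n) _)
  have hfirst : (a : ℝ) ^ (-(1 + ε)) = (a : ℝ) ^ (-ε) / a := by
    rw [show -(1 + ε) = -ε + -1 by ring, Real.rpow_add ha0, Real.rpow_neg_one, div_eq_mul_inv]
  calc ∑ j ∈ Icc a n, (j : ℝ) ^ (-(1 + ε))
      = (a : ℝ) ^ (-(1 + ε)) + ∑ j ∈ Ioc a n, (j : ℝ) ^ (-(1 + ε)) := by
        rw [Icc_eq_cons_Ioc han, sum_cons]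
    _ ≤ (a : ℝ) ^ (-ε) / a + (a : ℝ) ^ (-ε) / ε := by
        rw [hfirst]
        exact add_le_add_right (htail.trans hint) _
    _ = (1 / ε + 1 / a) * (a : ℝ) ^ (-ε) := by ring

theorem sum_filter_fin_add_one_eq_sum_Icc {M : Type*} [AddCommMonoid M] {n a : ℕ} (ha : 1 ≤ a)
    (φ : ℕ → M) :
    ∑ x ∈ univ.filter (fun x : Fin n => a ≤ (x : ℕ) + 1), φ ((x : ℕ) + 1) =
      ∑ j ∈ Icc a n, φ j := by
  rw [sum_filter, Fin.sum_univ_eq_sum_range (fun i => if a ≤ i + 1 then φ (i + 1) else 0),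
    ← sum_filter, show (range n).filter (fun i => a ≤ i + 1) = Ico (a - 1) n by ext; simp; omega,
    sum_Ico_add', Nat.sub_add_cancel ha, Ico_add_one_right_eq_Icc]

theorem Fin.monotone_cons_iff {α : Type*} [Preorder α] {c : ℕ} (x : α) (K : Fin c → α) :
    Monotone (Fin.cons x K : Fin (c + 1) → α) ↔ (∀ i, x ≤ K i) ∧ Monotone K := by
  refine ⟨fun h => ⟨fun i => by simpa using h (Fin.zero_le i.succ),
    fun i j hij => by simpa using h (Fin.succ_le_succ_iff.mpr hij)⟩, fun ⟨hx, hK⟩ i j hij => ?_⟩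
  cases i using Fin.cases with
  | zero => cases j using Fin.cases with
    | zero => exact le_rfl
    | succ j => simpa using hx j
  | succ i => cases j using Fin.cases with
    | zero => exact absurd hij (by simp)
    | succ j => simpa using hK (Fin.succ_le_succ_iff.mp hij)

/-- An entry `x : Fin n` of `J` stands for the index `x + 1 ∈ {1, …, n}`. -/
def IsChainFrom {n c : ℕ} (a : ℕ) (J : Fin c → Fin n) : Prop :=
  Monotone J ∧ ∀ i, a ≤ (J i : ℕ) + 1

theorem isChainFrom_cons {n c : ℕ} (a : ℕ) (x : Fin n) (K : Fin c → Fin n) :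
    IsChainFrom a (Fin.cons x K : Fin (c + 1) → Fin n) ↔
      a ≤ (x : ℕ) + 1 ∧ IsChainFrom ((x : ℕ) + 1) K := by
  simp only [IsChainFrom, Fin.monotone_cons_iff, Fin.forall_fin_succ, Fin.cons_zero,
    Fin.cons_succ, Fin.le_def]
  constructor
  · rintro ⟨⟨hx, hK⟩, ha, -⟩
    exact ⟨ha, hK, fun i => by have := hx i; omega⟩
  · rintro ⟨ha, hK, hKx⟩
    exact ⟨⟨fun i => by have := hKx i; omega, hK⟩, ha, fun i => by have := hKx i; omega⟩

theorem sum_isChainFrom_cons {M : Type*} [AddCommMonoid M] {n c : ℕ} (a : ℕ)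
    (F : (Fin (c + 1) → Fin n) → M) :
    ∑ J ∈ univ.filter (IsChainFrom a), F J =
      ∑ x ∈ univ.filter (fun x : Fin n => a ≤ (x : ℕ) + 1),
        ∑ K ∈ univ.filter (IsChainFrom ((x : ℕ) + 1)), F (Fin.cons x K) := by
  rw [sum_filter, ← (Fin.consEquiv fun _ => Fin n).sum_comp, Fintype.sum_prod_type, sum_filter]
  refine sum_congr rfl fun x _ => ?_
  change (∑ K, if IsChainFrom a (Fin.cons x K : Fin (c + 1) → Fin n)
    then F (Fin.cons x K) else 0) = _
  simp only [isChainFrom_cons, ite_and, sum_filter]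
  split_ifs <;> simp

/-- `iteratedTailSum g f n k a = ∑_{a ≤ j₁ ≤ ⋯ ≤ j_k ≤ n} g j₁ ⋯ g j_k f j_k` for `k ≥ 1`. -/
def iteratedTailSum {R : Type*} [CommSemiring R] (g f : ℕ → R) (n : ℕ) : ℕ → ℕ → R
  | 0, a => f a
  | k + 1, a => ∑ j ∈ Icc a n, g j * iteratedTailSum g f n k j

theorem sum_isChainFrom_eq_iteratedTailSum {R : Type*} [CommSemiring R] (g f : ℕ → R)
    (n c : ℕ) {a : ℕ} (ha : 1 ≤ a) :
    ∑ J ∈ univ.filter (IsChainFrom a : (Fin (c + 1) → Fin n) → Prop),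
        (∏ i, g ((J i : ℕ) + 1)) * f ((J (Fin.last c) : ℕ) + 1) =
      iteratedTailSum g f n (c + 1) a := by
  induction c generalizing a with
  | zero =>
    rw [sum_isChainFrom_cons, iteratedTailSum, ← sum_filter_fin_add_one_eq_sum_Icc ha]
    refine sum_congr rfl fun x _ => ?_
    rw [filter_true_of_mem fun K _ => ⟨fun i => i.elim0, fun i => i.elim0⟩]
    simp [iteratedTailSum]
  | succ c ih =>
    rw [sum_isChainFrom_cons, iteratedTailSum, ← sum_filter_fin_add_one_eq_sum_Icc ha]
    refine sum_congr rfl fun x _ => ?_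
    rw [← ih (Nat.le_add_left 1 x), mul_sum]
    refine sum_congr rfl fun K _ => ?_
    rw [Fin.prod_univ_succ, Fin.cons_last, Fin.cons_zero]
    simp only [Fin.cons_succ]
    ring

theorem iteratedTailSum_rpow_le {n t : ℕ} {δ β : ℝ} (hδ : 0 ≤ δ) (ht : 1 ≤ t) (k : ℕ)
    (hk : k * δ < β) {a : ℕ} (ha : t ≤ a) :
    iteratedTailSum (fun j => (j : ℝ) ^ (δ - 1)) (fun j => (j : ℝ) ^ (-β)) n k a ≤
      (∏ l ∈ Icc 1 k, (1 / (β - l * δ) + 1 / t)) * (a : ℝ) ^ (-(β - k * δ)) := by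
  induction k generalizing a with
  | zero => simp [iteratedTailSum]
  | succ k ih =>
    set ε := β - (k + 1 : ℕ) * δ with hε_def
    have hε : 0 < ε := by linarith
    have ht0 : (0 : ℝ) < t := by exact_mod_cast ht
    have hC : 0 ≤ ∏ l ∈ Icc 1 k, (1 / (β - l * δ) + 1 / t) := by
      refine prod_nonneg fun l hl => ?_
      have : (l : ℝ) ≤ k + 1 := by exact_mod_cast (mem_Icc.mp hl).2.trans k.le_succ
      have : 0 < β - l * δ := by push_cast at hε_def; nlinarith
      positivity
    have hterm : ∀ j ∈ Icc a n, (j : ℝ) ^ (δ - 1) *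
        iteratedTailSum (fun j => (j : ℝ) ^ (δ - 1)) (fun j => (j : ℝ) ^ (-β)) n k j ≤
        (∏ l ∈ Icc 1 k, (1 / (β - l * δ) + 1 / t)) * (j : ℝ) ^ (-(1 + ε)) := by
      intro j hj
      have hj0 : (0 : ℝ) < j := by exact_mod_cast ht.trans ((mem_Icc.mp hj).1.trans' ha)
      calc _ ≤ (j : ℝ) ^ (δ - 1) * ((∏ l ∈ Icc 1 k, (1 / (β - l * δ) + 1 / t)) *
              (j : ℝ) ^ (-(β - k * δ))) := by
            gcongr
            exact ih (by push_cast at hk; nlinarith) (ha.trans (mem_Icc.mp hj).1)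
        _ = _ := by
            rw [mul_left_comm, ← Real.rpow_add hj0, hε_def]
            congr 2
            push_cast
            ring
    have hta : 1 / (a : ℝ) ≤ 1 / t := one_div_le_one_div_of_le ht0 (by exact_mod_cast ha)
    calc iteratedTailSum _ _ n (k + 1) a
        ≤ ∑ j ∈ Icc a n, (∏ l ∈ Icc 1 k, (1 / (β - l * δ) + 1 / t)) * (j : ℝ) ^ (-(1 + ε)) :=
          sum_le_sum hterm
      _ ≤ (∏ l ∈ Icc 1 k, (1 / (β - l * δ) + 1 / t)) * ((1 / ε + 1 / t) * (a : ℝ) ^ (-ε)) := by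
          rw [← mul_sum]
          gcongr
          exact (sum_Icc_rpow_neg_one_add_le hε (ht.trans ha) n).trans (by gcongr)
      _ = _ := by
          rw [prod_Icc_succ_top (Nat.le_add_left 1 k), hε_def]
          ring

theorem le_iSup_rpow_mul_mul_rpow_neg {ι : Type*} [Finite ι] {c : ι → ℝ} (hc : ∀ i, 0 < c i)
    (p : ℝ) (w : ι → ℝ) (i : ι) : w i ≤ (⨆ j, c j ^ p * w j) * c i ^ (-p) := by
  calc w i = c i ^ p * w i * c i ^ (-p) := by
        rw [mul_right_comm, ← Real.rpow_add (hc i), add_neg_cancel, Real.rpow_zero, one_mul]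
    _ ≤ (⨆ j, c j ^ p * w j) * c i ^ (-p) := by
        gcongr
        · exact (Real.rpow_pos_of_pos (hc i) _).le
        · exact le_ciSup (f := fun j => c j ^ p * w j) (Set.finite_range _).bddAbove i

theorem sum_isChainFrom_le_prod_iSup_mul_iteratedTailSum {n c t : ℕ} (ht : 1 ≤ t) (p e : ℝ)
    (w : Fin (c + 1) → Fin n → ℝ) (hw : ∀ i l, 0 ≤ w i l) :
    ∑ J ∈ univ.filter (IsChainFrom t),
        (∏ i, w i (J i)) * ((J (Fin.last c) : ℕ) + 1 : ℝ) ^ e ≤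
      (∏ i, ⨆ l : Fin n, ((l : ℕ) + 1 : ℝ) ^ p * w i l) *
        iteratedTailSum (fun j => (j : ℝ) ^ (-p)) (fun j => (j : ℝ) ^ e) n (c + 1) t := by
  calc _ ≤ ∑ J ∈ univ.filter (IsChainFrom t),
        (∏ i, (⨆ l : Fin n, ((l : ℕ) + 1 : ℝ) ^ p * w i l) * ((J i : ℕ) + 1 : ℝ) ^ (-p)) *
          ((J (Fin.last c) : ℕ) + 1 : ℝ) ^ e := by
        refine sum_le_sum fun J _ => mul_le_mul_of_nonneg_right
          (prod_le_prod (fun i _ => hw _ _) fun i _ => ?_) (by positivity)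
        exact le_iSup_rpow_mul_mul_rpow_neg (fun l => by positivity) _ (w i) (J i)
    _ = _ := by
        rw [← sum_isChainFrom_eq_iteratedTailSum _ _ _ _ ht, mul_sum]
        push_cast
        simp_rw [prod_mul_distrib, mul_assoc]

/-- Lemma 4.9 ("segundos"): for `1 < r ≤ 2`, `m ≥ 3`, `q = (mr')'`, `1 ≤ k ≤ m-2`,
decreasing non-negative vectors `w i` (the decreasing rearrangements `z^{(i_l)*}`) and `1 ≤ t ≤ n`:
`∑_{t ≤ j_1 ≤ ⋯ ≤ j_k ≤ n} w_1(j_1) ⋯ w_k(j_k) j_k^{1/r - 1/q}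
  ≤ (∏_{l=1}^k (mr'/(m-l-1) + 1/t)) t^{(k+1)/q' - 1/r'} ∏_l ‖w_l‖_{q,∞}`,
where `‖w‖_{q,∞} = max_l l^{1/q} w_l` (indices 0-indexed via `+1`). -/
theorem tail_monotone_tuple_sum_bound (r r' q q' : ℝ) (m n k t : ℕ)
    (hr : 1 < r)
    (hconj : 1 / r + 1 / r' = 1) (hq : 1 / q = 1 - 1 / ((m : ℝ) * r'))
    (hq' : 1 / q + 1 / q' = 1)
    (hk1 : 1 ≤ k) (hk2 : k ≤ m - 2) (ht1 : 1 ≤ t)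
    (w : Fin k → Fin n → ℝ)
    (hw0 : ∀ i l, 0 ≤ w i l) :
    ∑ J ∈ Finset.univ.filter (fun J : Fin k → Fin n =>
        (∀ a b : Fin k, a ≤ b → J a ≤ J b) ∧ ∀ i : Fin k, t ≤ (J i : ℕ) + 1),
      (∏ i : Fin k, w i (J i)) *
        (((J (⟨k - 1, by omega⟩ : Fin k) : ℕ) + 1 : ℝ)) ^ (1 / r - 1 / q) ≤
    (∏ l ∈ Finset.Icc 1 k, ((m : ℝ) * r' / ((m : ℝ) - (l : ℝ) - 1) + 1 / (t : ℝ))) *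
      (t : ℝ) ^ (((k : ℝ) + 1) / q' - 1 / r') *
      ∏ i : Fin k, ⨆ l : Fin n, ((l : ℕ) + 1 : ℝ) ^ (1 / q) * w i l := by
  obtain ⟨c, rfl⟩ : ∃ c, k = c + 1 := ⟨k - 1, by omega⟩
  have hr' : 0 < r' := one_div_pos.mp (by linarith [one_div_lt_one_div_of_lt one_pos hr])
  have hm : (c : ℝ) + 3 ≤ m := by exact_mod_cast (by omega : c + 3 ≤ m)
  have hm0 : (0 : ℝ) < m := by linarith [c.cast_nonneg (α := ℝ)]
  set δ := 1 / ((m : ℝ) * r') with hδ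
  have hδ0 : 0 < δ := by positivity
  have hmδ : (m : ℝ) * δ = 1 / r' := by rw [hδ]; field_simp
  have hg : -(1 / q) = δ - 1 := by rw [hq]; ring
  have hf : 1 / r - 1 / q = -((m - 1) * δ) := by linarith
  have hset : univ.filter (fun J : Fin (c + 1) → Fin n =>
      (∀ a b, a ≤ b → J a ≤ J b) ∧ ∀ i, t ≤ (J i : ℕ) + 1) = univ.filter (IsChainFrom t) := by
    ext J
    simp only [mem_filter]
    rfl
  have hM : 0 ≤ ∏ i, ⨆ l : Fin n, ((l : ℕ) + 1 : ℝ) ^ (1 / q) * w i l :=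
    prod_nonneg fun i _ => Real.iSup_nonneg fun l => by have := hw0 i l; positivity
  have hfactor : ∀ l ∈ Icc 1 (c + 1), 1 / ((m - 1) * δ - l * δ) + 1 / (t : ℝ) =
      m * r' / (m - l - 1) + 1 / t := fun l _ => by
    rw [show (m - 1) * δ - l * δ = (m - l - 1) / (m * r') by rw [hδ]; ring, one_div_div]
  have hexp : -((m - 1) * δ - (c + 1 : ℕ) * δ) = (((c + 1 : ℕ) : ℝ) + 1) / q' - 1 / r' := by
    rw [div_eq_mul_one_div _ q', show 1 / q' = δ by linarith, ← hmδ]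
    push_cast
    ring
  have hmodel := iteratedTailSum_rpow_le (n := n) hδ0.le ht1 (c + 1) (β := (m - 1) * δ)
    (by push_cast; nlinarith) le_rfl
  rw [prod_congr rfl hfactor, hexp, ← hg, ← hf] at hmodel
  rw [hset, mul_comm]
  exact (sum_isChainFrom_le_prod_iSup_mul_iteratedTailSum ht1 (1 / q) _ w hw0).trans
    (mul_le_mul_of_nonneg_left hmodel hM)
end

section
/- For every $1 < r \le 2$, all $M, N \in \mathbb{N}$, every $\varepsilon > 0$, and every decreasing $z \in \mathbb{C}^N$: $\sum_{\alpha \in \Lambda_T(M,N)} |z^\alpha|\, |[\alpha]|^{1/r} \le 2 (1+\varepsilon)^{M/r'}\, \|z\|_{m_{\Psi_r}}^M\, N^{\frac{1}{(1+\varepsilon)r'}}$, where $\Lambda_T(M,N)$ is the set of multi-indices $\alpha \in \mathbb{N}_0^N$ with all entries 0 or 1 and $|\alpha| = M$, and $|[\alpha]| = M!/\alpha!$. -/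
open Finset
open scoped Classical

/-- Tetrahedral part of Lemma "tetra": for `1 < r ≤ 2`, `M, N ∈ ℕ`, `ε > 0` and a decreasing
vector `z ∈ ℂ^N` (1-indexed, entries `z 1, …, z N`) with Marcinkiewicz norm at most `K`,
`∑_{α ∈ Λ_T(M,N)} |z^α| (M!/α!)^{1/r} ≤ 2 (1+ε)^{M/r'} K^M N^{1/((1+ε)r')}`. -/
theorem tetrahedral_sum_bound (r r' : ℝ) (hr : 1 < r) (hr2 : r ≤ 2)
    (hconj : 1 / r + 1 / r' = 1) (M N : ℕ) (hN : 1 ≤ N) (ε : ℝ) (hε : 0 < ε)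
    (z : ℕ → ℂ)
    (hdec : ∀ i j : ℕ, 1 ≤ i → i ≤ j → j ≤ N → ‖z j‖ ≤ ‖z i‖)
    (K : ℝ) (hK0 : 0 ≤ K)
    (hK : ∀ n : ℕ, 1 ≤ n → n ≤ N →
      ∑ l ∈ Finset.Icc 1 n, ‖z l‖ ≤ K * Real.log ((n : ℝ) + 1) ^ (1 - 1 / r)) :
    ∑ α ∈ (Finset.Nat.antidiagonalTuple N M).filter (fun α : Fin N → ℕ => ∀ i, α i ≤ 1),
      ‖∏ i : Fin N, z ((i : ℕ) + 1) ^ α i‖ *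
        ((Nat.factorial M : ℝ) / ∏ i : Fin N, (Nat.factorial (α i) : ℝ)) ^ (1 / r) ≤
    2 * (1 + ε) ^ ((M : ℝ) / r') * K ^ M * (N : ℝ) ^ (1 / ((1 + ε) * r')) := by
  -- basic facts about r, r'
  have hr0 : 0 < r := lt_trans one_pos hr
  have h1r' : 1 / r' = 1 - 1 / r := by linarith
  have h1r'pos : 0 < 1 / r' := by
    rw [h1r']
    have : 1 / r < 1 := by
      rw [div_lt_one hr0]; exact hr
    linarith
  have hr'pos : 0 < r' := one_div_pos.mp h1r'pos
  have h1r'le : 1 / r' ≤ 1 := by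
    rw [h1r']
    have : (1:ℝ)/2 ≤ 1 / r := by
      apply div_le_div_of_nonneg_left one_pos.le hr0 hr2
    linarith
  set a : Fin N → ℝ := fun i => ‖z ((i : ℕ) + 1)‖ with ha_def
  have ha : ∀ i, 0 ≤ a i := fun i => norm_nonneg _
  set T := (Finset.Nat.antidiagonalTuple N M).filter (fun α : Fin N → ℕ => ∀ i, α i ≤ 1) with hT
  set S := ∑ α ∈ T, ∏ i, a i ^ α i with hS
  have hSnonneg : 0 ≤ S := Finset.sum_nonneg fun α _ =>
    Finset.prod_nonneg fun i _ => pow_nonneg (ha i) _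
  -- Step A : LHS = (M!)^(1/r) * S
  have stepA : ∑ α ∈ T,
      ‖∏ i : Fin N, z ((i : ℕ) + 1) ^ α i‖ *
        ((Nat.factorial M : ℝ) / ∏ i : Fin N, (Nat.factorial (α i) : ℝ)) ^ (1 / r)
      = ((M.factorial : ℝ)) ^ (1 / r) * S := by
    rw [hS, Finset.mul_sum]
    refine Finset.sum_congr rfl fun α hα => ?_
    have hα1 : ∀ i, α i ≤ 1 := (Finset.mem_filter.mp hα).2
    have hfac : ∏ i : Fin N, (Nat.factorial (α i) : ℝ) = 1 := by
      apply Finset.prod_eq_one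
      intro i _
      have h2 := hα1 i
      interval_cases (α i) <;> simp
    rw [hfac, div_one, norm_prod]
    simp_rw [norm_pow]
    ring
  rw [stepA]
  -- Step B : M! * S ≤ (∑ a)^M
  have stepB : (M.factorial : ℝ) * S ≤ (∑ i, a i) ^ M := by
    rw [Finset.sum_pow_eq_sum_piAntidiag Finset.univ a M, hS, Finset.mul_sum]
    have hsub : T ⊆ Finset.piAntidiag Finset.univ M := by
      intro α hα
      rw [Finset.mem_piAntidiag]
      refine ⟨Finset.Nat.mem_antidiagonalTuple.mp (Finset.mem_filter.mp hα).1, fun i _ => Finset.mem_univ i⟩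
    calc ∑ α ∈ T, (M.factorial : ℝ) * ∏ i, a i ^ α i
        = ∑ α ∈ T, (Nat.multinomial Finset.univ α : ℝ) * ∏ i, a i ^ α i := by
          refine Finset.sum_congr rfl fun α hα => ?_
          congr 1
          have hα1 : ∀ i, α i ≤ 1 := (Finset.mem_filter.mp hα).2
          have hsum : ∑ i, α i = M := Finset.Nat.mem_antidiagonalTuple.mp (Finset.mem_filter.mp hα).1
          have hfac : ∏ i : Fin N, Nat.factorial (α i) = 1 := by
            apply Finset.prod_eq_one
            intro i _
            have h2 := hα1 i
            interval_cases (α i) <;> simp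
          rw [Nat.multinomial, hfac, Nat.div_one, hsum]
      _ ≤ ∑ α ∈ Finset.piAntidiag Finset.univ M, (Nat.multinomial Finset.univ α : ℝ) * ∏ i, a i ^ α i := by
          apply Finset.sum_le_sum_of_subset_of_nonneg hsub
          intro α _ _
          exact mul_nonneg (Nat.cast_nonneg _) (Finset.prod_nonneg fun i _ => pow_nonneg (ha i) _)
  -- Step C : ∑ a ≤ K * L^(1/r')
  set L := Real.log ((N : ℝ) + 1) with hL_def
  have hL : 0 < L := Real.log_pos (by
    have : (1:ℝ) ≤ N := by exact_mod_cast hN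
    linarith)
  have stepC : ∑ i, a i ≤ K * L ^ (1 / r') := by
    have himg : Finset.image (· + 1) (Finset.range N) = Finset.Icc 1 N := by
      ext l
      simp only [Finset.mem_image, Finset.mem_range, Finset.mem_Icc]
      constructor
      · rintro ⟨j, hj, rfl⟩; omega
      · rintro ⟨h1, h2⟩; exact ⟨l - 1, by omega, by omega⟩
    have : ∑ i, a i = ∑ l ∈ Finset.Icc 1 N, ‖z l‖ := by
      rw [← himg, Finset.sum_image (by intro x _ y _ h; simp only at h; omega)]
      rw [ha_def]
      exact Fin.sum_univ_eq_sum_range (fun j => ‖z (j + 1)‖) N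
    rw [this, h1r']
    exact hK N hN le_rfl
  -- remaining analysis
  have hMf : (0:ℝ) < (M.factorial : ℝ) := by exact_mod_cast M.factorial_pos
  have hN1 : (1:ℝ) ≤ (N:ℝ) := by exact_mod_cast hN
  have h1ε : (0:ℝ) < 1 + ε := by linarith
  have h1 : S ≤ (∑ i, a i) ^ M / (M.factorial : ℝ) := by
    rw [le_div_iff₀ hMf]
    linarith [stepB]
  have h2 : (∑ i, a i) ^ M ≤ (K * L ^ (1 / r')) ^ M :=
    pow_le_pow_left₀ (Finset.sum_nonneg fun i _ => ha i) stepC M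
  have h3 : S ≤ (K * L ^ (1 / r')) ^ M / (M.factorial : ℝ) := by
    exact h1.trans (div_le_div_of_nonneg_right h2 hMf.le)
  -- key algebraic identity
  have key : ((M.factorial : ℝ)) ^ (1 / r) * ((K * L ^ (1 / r')) ^ M / (M.factorial : ℝ))
      = K ^ M * ((L ^ M / (M.factorial : ℝ)) ^ (1 / r')) := by
    have e1 : ((M.factorial : ℝ)) ^ (1 / r) * ((M.factorial : ℝ)) ^ (1 / r')
        = (M.factorial : ℝ) := by
      rw [← Real.rpow_add hMf, hconj, Real.rpow_one]
    have e2 : (L ^ M / (M.factorial : ℝ)) ^ (1 / r')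
        = L ^ ((M : ℝ) * (1 / r')) / ((M.factorial : ℝ)) ^ (1 / r') := by
      rw [Real.div_rpow (pow_nonneg hL.le M) (Nat.cast_nonneg _), ← Real.rpow_natCast L M,
        ← Real.rpow_mul hL.le]
    have e3 : (K * L ^ (1 / r')) ^ M = K ^ M * L ^ ((M : ℝ) * (1 / r')) := by
      rw [mul_pow, ← Real.rpow_natCast (L ^ (1 / r')) M, ← Real.rpow_mul hL.le,
        mul_comm (1 / r') (M : ℝ)]
    rw [e2, e3]
    have hB : ((M.factorial : ℝ)) ^ (1 / r') ≠ 0 := by positivity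
    rw [mul_div_assoc', mul_div_assoc' (K ^ M), div_eq_div_iff hMf.ne' hB]
    linear_combination K ^ M * L ^ ((M : ℝ) * (1 / r')) * e1
  -- exponential bound
  have h5 : L ^ M / (M.factorial : ℝ) ≤ 2 * (1 + ε) ^ M * (N : ℝ) ^ (1 / (1 + ε)) := by
    have hx : 0 ≤ L / (1 + ε) := div_nonneg hL.le h1ε.le
    have hexp : (L / (1 + ε)) ^ M / (M.factorial : ℝ) ≤ Real.exp (L / (1 + ε)) := by
      calc (L / (1 + ε)) ^ M / (M.factorial : ℝ)
          ≤ ∑ i ∈ Finset.range (M + 1), (L / (1 + ε)) ^ i / (Nat.factorial i : ℝ) := by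
            refine Finset.single_le_sum (f := fun i => (L / (1 + ε)) ^ i / (Nat.factorial i : ℝ))
              (fun i _ => by positivity) (Finset.self_mem_range_succ M)
        _ ≤ Real.exp (L / (1 + ε)) := Real.sum_le_exp_of_nonneg hx _
    have hE : Real.exp (L / (1 + ε)) = ((N : ℝ) + 1) ^ (1 / (1 + ε)) := by
      rw [Real.rpow_def_of_pos (by positivity : (0:ℝ) < (N : ℝ) + 1), mul_one_div]
    have hNp : ((N : ℝ) + 1) ^ (1 / (1 + ε)) ≤ 2 * (N : ℝ) ^ (1 / (1 + ε)) := by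
      calc ((N : ℝ) + 1) ^ (1 / (1 + ε)) ≤ ((2 : ℝ) * N) ^ (1 / (1 + ε)) :=
            Real.rpow_le_rpow (by positivity) (by linarith) (by positivity)
        _ = (2 : ℝ) ^ (1 / (1 + ε)) * (N : ℝ) ^ (1 / (1 + ε)) :=
            Real.mul_rpow (by norm_num) (Nat.cast_nonneg N)
        _ ≤ 2 * (N : ℝ) ^ (1 / (1 + ε)) := by
            have h2c : (2 : ℝ) ^ (1 / (1 + ε)) ≤ 2 := by
              calc (2 : ℝ) ^ (1 / (1 + ε)) ≤ (2 : ℝ) ^ (1 : ℝ) :=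
                    Real.rpow_le_rpow_of_exponent_le one_le_two (by
                      rw [div_le_one h1ε]; linarith)
                _ = 2 := Real.rpow_one 2
            exact mul_le_mul_of_nonneg_right h2c (Real.rpow_nonneg (Nat.cast_nonneg N) _)
    have heq : L ^ M / (M.factorial : ℝ)
        = (1 + ε) ^ M * ((L / (1 + ε)) ^ M / (M.factorial : ℝ)) := by
      rw [div_pow]
      field_simp
    rw [heq]
    calc (1 + ε) ^ M * ((L / (1 + ε)) ^ M / (M.factorial : ℝ))
        ≤ (1 + ε) ^ M * (2 * (N : ℝ) ^ (1 / (1 + ε))) := by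
          refine mul_le_mul_of_nonneg_left ?_ (by positivity)
          refine hexp.trans ?_
          rw [hE]
          exact hNp
      _ = 2 * (1 + ε) ^ M * (N : ℝ) ^ (1 / (1 + ε)) := by ring
  have h6 : ((L ^ M / (M.factorial : ℝ)) ^ (1 / r'))
      ≤ (2 * (1 + ε) ^ M * (N : ℝ) ^ (1 / (1 + ε))) ^ (1 / r') :=
    Real.rpow_le_rpow (by positivity) h5 h1r'pos.le
  have h7 : (2 * (1 + ε) ^ M * (N : ℝ) ^ (1 / (1 + ε))) ^ (1 / r')
      ≤ 2 * (1 + ε) ^ ((M : ℝ) / r') * (N : ℝ) ^ (1 / ((1 + ε) * r')) := by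
    rw [Real.mul_rpow (by positivity) (by positivity),
      Real.mul_rpow (by norm_num) (by positivity)]
    have e3 : (((1 + ε) ^ M : ℝ)) ^ (1 / r') = (1 + ε) ^ ((M : ℝ) / r') := by
      rw [← Real.rpow_natCast (1 + ε) M, ← Real.rpow_mul h1ε.le, mul_one_div]
    have e4 : (((N : ℝ)) ^ (1 / (1 + ε))) ^ (1 / r') = (N : ℝ) ^ (1 / ((1 + ε) * r')) := by
      rw [← Real.rpow_mul (Nat.cast_nonneg N)]
      congr 1
      field_simp
    rw [e3, e4]
    have h2r : (2 : ℝ) ^ (1 / r') ≤ 2 := by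
      calc (2 : ℝ) ^ (1 / r') ≤ (2 : ℝ) ^ (1 : ℝ) :=
            Real.rpow_le_rpow_of_exponent_le one_le_two h1r'le
        _ = 2 := Real.rpow_one 2
    have : (0:ℝ) ≤ (1 + ε) ^ ((M : ℝ) / r') := Real.rpow_nonneg h1ε.le _
    have : (0:ℝ) ≤ (N : ℝ) ^ (1 / ((1 + ε) * r')) := Real.rpow_nonneg (Nat.cast_nonneg N) _
    gcongr
  calc ((M.factorial : ℝ)) ^ (1 / r) * S
      ≤ ((M.factorial : ℝ)) ^ (1 / r) * ((K * L ^ (1 / r')) ^ M / (M.factorial : ℝ)) :=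
        mul_le_mul_of_nonneg_left h3 (Real.rpow_nonneg hMf.le _)
    _ = K ^ M * ((L ^ M / (M.factorial : ℝ)) ^ (1 / r')) := key
    _ ≤ K ^ M * (2 * (1 + ε) ^ ((M : ℝ) / r') * (N : ℝ) ^ (1 / ((1 + ε) * r'))) :=
        mul_le_mul_of_nonneg_left (h6.trans h7) (pow_nonneg hK0 M)
    _ = 2 * (1 + ε) ^ ((M : ℝ) / r') * K ^ M * (N : ℝ) ^ (1 / ((1 + ε) * r')) := by ring
end

section
/- Let $\alpha \in \mathbb{N}_0^N$ with $|\alpha| = M$, and write $\alpha = \alpha_T + \alpha_E$ where $(\alpha_T)_i = 1$ if $\alpha_i$ is odd and $0$ otherwise, and $(\alpha_E)_i = \alpha_i - (\alpha_T)_i$. Then $\frac{M!}{\alpha!} \le 2^M \cdot \frac{k!}{\alpha_T!} \cdot \frac{(M-k)!}{\alpha_E!}$, where $k = |\alpha_T|$ is the number of odd entries of $\alpha$. -/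
open Finset

/-- Decomposition of a multi-index into tetrahedral and even parts: for `α ∈ ℕ_0^N` with
`|α| = M`, writing `(α_T)_i = α_i % 2` (so `(α_T)_i = 1` iff `α_i` is odd),
`(α_E)_i = α_i - α_i % 2` and `k = |α_T|`, we have
`M!/α! ≤ 2^M (k!/α_T!) ((M-k)!/α_E!)`. -/
theorem multinomial_odd_even_decomposition (N M : ℕ) (α : Fin N → ℕ)
    (hα : ∑ i, α i = M) :
    (Nat.factorial M : ℝ) / ∏ i : Fin N, (Nat.factorial (α i) : ℝ) ≤
      2 ^ M *
        ((Nat.factorial (∑ i, α i % 2) : ℝ) / ∏ i : Fin N, (Nat.factorial (α i % 2) : ℝ)) *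
        ((Nat.factorial (M - ∑ i, α i % 2) : ℝ) /
          ∏ i : Fin N, (Nat.factorial (α i - α i % 2) : ℝ)) := by
  set k := ∑ i, α i % 2 with hkdef
  have hk : k ≤ M := by
    rw [← hα]
    exact Finset.sum_le_sum fun i _ => Nat.mod_le _ _
  -- M! ≤ 2^M * (k! * (M-k)!)
  have hchoose : M.choose k ≤ 2 ^ M := by
    calc M.choose k ≤ ∑ i ∈ Finset.range (M + 1), M.choose i :=
          Finset.single_le_sum (fun i _ => Nat.zero_le _) (by simp [Nat.lt_succ_of_le hk])
      _ = 2 ^ M := Nat.sum_range_choose M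
  have hfacN : M.factorial ≤ 2 ^ M * (k.factorial * (M - k).factorial) := by
    have h1 : M.choose k * (k.factorial * (M - k).factorial) = M.factorial := by
      rw [← Nat.choose_mul_factorial_mul_factorial hk]; ring
    calc M.factorial = M.choose k * (k.factorial * (M - k).factorial) := h1.symm
      _ ≤ 2 ^ M * (k.factorial * (M - k).factorial) :=
          Nat.mul_le_mul_right _ hchoose
  have hfac : (M.factorial : ℝ) ≤ 2 ^ M * ((k.factorial : ℝ) * (M - k).factorial) := by
    exact_mod_cast hfacN
  -- product bound
  have hprodN : (∏ i, (α i % 2).factorial) * ∏ i, (α i - α i % 2).factorial ≤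
      ∏ i, (α i).factorial := by
    rw [← Finset.prod_mul_distrib]
    refine Finset.prod_le_prod' fun i _ => ?_
    have hdvd : (α i % 2).factorial * (α i - α i % 2).factorial ∣
        (α i % 2 + (α i - α i % 2)).factorial :=
      Nat.factorial_mul_factorial_dvd_factorial_add _ _
    rw [Nat.add_sub_cancel' (Nat.mod_le _ _)] at hdvd
    exact Nat.le_of_dvd (Nat.factorial_pos _) hdvd
  have hprod : (∏ i, ((α i % 2).factorial : ℝ)) * ∏ i, ((α i - α i % 2).factorial : ℝ) ≤
      ∏ i, ((α i).factorial : ℝ) := by exact_mod_cast hprodN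
  have hQ : (0 : ℝ) < ∏ i, ((α i % 2).factorial : ℝ) :=
    Finset.prod_pos fun i _ => by exact_mod_cast Nat.factorial_pos _
  have hR : (0 : ℝ) < ∏ i, ((α i - α i % 2).factorial : ℝ) :=
    Finset.prod_pos fun i _ => by exact_mod_cast Nat.factorial_pos _
  have key : (M.factorial : ℝ) / ∏ i, ((α i).factorial : ℝ) ≤
      (2 ^ M * ((k.factorial : ℝ) * (M - k).factorial)) /
        ((∏ i, ((α i % 2).factorial : ℝ)) * ∏ i, ((α i - α i % 2).factorial : ℝ)) := by
    apply div_le_div₀ (by positivity) hfac (by positivity) hprod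
  calc (M.factorial : ℝ) / ∏ i, ((α i).factorial : ℝ)
      ≤ (2 ^ M * ((k.factorial : ℝ) * (M - k).factorial)) /
        ((∏ i, ((α i % 2).factorial : ℝ)) * ∏ i, ((α i - α i % 2).factorial : ℝ)) := key
    _ = 2 ^ M * ((k.factorial : ℝ) / ∏ i, ((α i % 2).factorial : ℝ)) *
        (((M - k).factorial : ℝ) / ∏ i, ((α i - α i % 2).factorial : ℝ)) := by
        field_simp
end

section
/- Let $1 < r \le 2$, $m \ge 3$, and $q = (mr')'$ (i.e. $1/q = 1 - 1/(mr')$), and set $\sigma_m = \frac{m-1}{m}(1 - \frac{1}{r})$. Then $\sigma_m = \frac{1}{q} - \frac{1}{r}$, and for every $z \in \ell_r$ the sequence $\left(\frac{z_n}{n^{\sigma_m}}\right)_n$ belongs to the Lorentz space $\ell_{q,r}$. -/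
open Finset

private lemma greedy_aux (v g : ℕ → ℝ) (D : ℕ → Finset ℕ) :
    ∀ N : ℕ, (∀ a b, a ≤ b → b < N → D a ⊆ D b) →
    (∀ n, n < N → n + 1 ≤ (D n).card) →
    (∀ n, n < N → ∀ j ∈ D n, v n ≤ g j) →
    ∃ C : Finset ℕ, C.card = N ∧ (∀ j ∈ C, ∃ n, n < N ∧ j ∈ D n) ∧
      ∑ n ∈ Finset.range N, v n ≤ ∑ j ∈ C, g j := by
  intro N
  induction N with
  | zero => exact fun _ _ _ => ⟨∅, rfl, by simp, by simp⟩
  | succ N ih =>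
    intro hmono hcard hvg
    obtain ⟨C, hCcard, hCmem, hCsum⟩ :=
      ih (fun a b hab hb => hmono a b hab (hb.trans (Nat.lt_succ_self N)))
        (fun n hn => hcard n (hn.trans (Nat.lt_succ_self N)))
        (fun n hn => hvg n (hn.trans (Nat.lt_succ_self N)))
    have hCD : C ⊆ D N := by
      intro j hj
      obtain ⟨n, hn, hjn⟩ := hCmem j hj
      exact hmono n N (le_of_lt hn) (Nat.lt_succ_self N) hjn
    have hlt : C.card < (D N).card := by
      rw [hCcard]; exact hcard N (Nat.lt_succ_self N)
    have hns : ¬ D N ⊆ C := fun h => absurd (Finset.card_le_card h) (by omega)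
    obtain ⟨j0, hj0D, hj0C⟩ := Finset.not_subset.1 hns
    refine ⟨insert j0 C, ?_, ?_, ?_⟩
    · rw [Finset.card_insert_of_notMem hj0C, hCcard]
    · intro j hj
      rcases Finset.mem_insert.1 hj with h | h
      · exact ⟨N, Nat.lt_succ_self N, h ▸ hj0D⟩
      · obtain ⟨n, hn, hjn⟩ := hCmem j h
        exact ⟨n, hn.trans (Nat.lt_succ_self N), hjn⟩
    · rw [Finset.sum_range_succ, Finset.sum_insert hj0C]
      have := hvg N (Nat.lt_succ_self N) j0 hj0D
      linarith

private lemma sum_halves_aux (u : ℕ → ℝ) (M : ℕ) :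
    ∑ n ∈ Finset.range (2 * M), u (n / 2) = 2 * ∑ k ∈ Finset.range M, u k := by
  induction M with
  | zero => simp
  | succ M ih =>
    have h2 : 2 * (M + 1) = (2 * M) + 1 + 1 := by ring
    rw [h2, Finset.sum_range_succ, Finset.sum_range_succ, ih, Finset.sum_range_succ]
    have e1 : (2 * M) / 2 = M := by omega
    have e2 : (2 * M + 1) / 2 = M := by omega
    rw [e1, e2]; ring

/-- Multipliers: for `1 < r ≤ 2`, `m ≥ 3`, `q = (mr')'` and `σ_m = ((m-1)/m)(1 - 1/r)`,
we have `σ_m = 1/q - 1/r`, and for every `z ∈ ℓ_r` the sequence `(z_n / n^{σ_m})_n` lies in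
the Lorentz space `ℓ_{q,r}`, i.e. `∑_n (w_n^* n^{1/q - 1/r})^r < ∞` where `w_n = z_n/n^{σ_m}`. -/
theorem multiplier_into_lorentz (r r' q : ℝ) (m : ℕ)
    (hr : 1 < r) (hr2 : r ≤ 2) (hm : 3 ≤ m)
    (hconj : 1 / r + 1 / r' = 1) (hq : 1 / q = 1 - 1 / ((m : ℝ) * r')) :
    ((m : ℝ) - 1) / m * (1 - 1 / r) = 1 / q - 1 / r ∧
    ∀ z : ℕ → ℂ, Summable (fun n : ℕ => ‖z n‖ ^ r) →
      Summable (fun n : ℕ =>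
        (decRearr (fun j : ℕ => z j /
            ((((j : ℝ) ^ (((m : ℝ) - 1) / m * (1 - 1 / r))) : ℝ) : ℂ)) (n + 1) *
          ((n : ℝ) + 1) ^ (1 / q - 1 / r)) ^ r) := by
  have hrpos : (0:ℝ) < r := by linarith
  have hr0 : r ≠ 0 := ne_of_gt hrpos
  have hm3 : (3:ℝ) ≤ (m:ℝ) := by exact_mod_cast hm
  have hm0 : (m:ℝ) ≠ 0 := by linarith
  have h1r : 1 / r < 1 := by rw [div_lt_one hrpos]; exact hr
  have h1r0 : 0 < 1 / r := by positivity
  have hr'inv : 1 / r' = 1 - 1 / r := by linarith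
  have hr'pos : 0 < r' := by
    have h : 0 < 1 / r' := by rw [hr'inv]; linarith
    exact one_div_pos.mp h
  have hr'0 : r' ≠ 0 := ne_of_gt hr'pos
  have hσ : ((m : ℝ) - 1) / m * (1 - 1 / r) = 1 / q - 1 / r := by
    rw [hq]
    have key : 1 / ((m:ℝ) * r') = (1 - 1 / r) / m := by
      rw [← hr'inv]; field_simp
    rw [key]
    field_simp
    ring
  refine ⟨hσ, ?_⟩
  intro z hz
  rw [← hσ]
  set σ : ℝ := ((m : ℝ) - 1) / m * (1 - 1 / r) with hσdef
  have hσpos : 0 < σ := by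
    apply mul_pos
    · apply div_pos <;> linarith
    · have : 1 / r < 1 := h1r
      linarith
  set a : ℕ → ℝ := fun j => ‖z j‖ with ha_def
  have ha : ∀ j, 0 ≤ a j := fun j => norm_nonneg _
  have htend : Filter.Tendsto (fun j => a j ^ r) Filter.cofinite (nhds 0) :=
    hz.tendsto_cofinite_zero
  have hfin : ∀ c : ℝ, 0 < c → {j : ℕ | c ≤ a j}.Finite := by
    intro c hc
    have h1 : ∀ᶠ j in Filter.cofinite, a j ^ r < c ^ r :=
      htend.eventually (gt_mem_nhds (Real.rpow_pos_of_pos hc r))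
    have h2 : {j : ℕ | ¬ (a j ^ r < c ^ r)}.Finite := Filter.eventually_cofinite.mp h1
    refine h2.subset fun j hj => ?_
    simp only [Set.mem_setOf_eq, not_lt]
    exact Real.rpow_le_rpow hc.le hj hrpos.le
  have hbdd : ∃ M : ℝ, ∀ j, a j ≤ M := by
    have h1 := hfin 1 one_pos
    refine ⟨h1.toFinset.fold max 1 a, fun j => ?_⟩
    by_cases hj : 1 ≤ a j
    · exact (Finset.le_fold_max _).2 (Or.inr ⟨j, h1.mem_toFinset.2 hj, le_refl _⟩)
    · exact le_trans (le_of_not_ge hj) ((Finset.le_fold_max _).2 (Or.inl le_rfl))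
  obtain ⟨M, hM⟩ := hbdd
  set T : ℕ → Set ℝ := fun n =>
    {s : ℝ | 0 ≤ s ∧ ∀ F : Finset ℕ, (∀ j ∈ F, s < a j) → F.card ≤ n} with hT_def
  have hTne : ∀ n, (T n).Nonempty := by
    intro n
    refine ⟨max M 0, le_max_right _ _, fun F hF => ?_⟩
    have hFe : F = ∅ := by
      apply Finset.eq_empty_of_forall_notMem
      intro j hj
      exact absurd (lt_of_le_of_lt ((hM j).trans (le_max_left M 0)) (hF j hj)) (lt_irrefl _)
    simp [hFe]
  have hTbdd : ∀ n, BddBelow (T n) := fun n => ⟨0, fun s hs => hs.1⟩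
  set t : ℕ → ℝ := fun n => sInf (T n) with ht_def
  have ht0 : ∀ n, 0 ≤ t n := fun n => le_csInf (hTne n) (fun s hs => hs.1)
  have htanti : ∀ n k : ℕ, n ≤ k → t k ≤ t n := by
    intro n k hnk
    exact csInf_le_csInf (hTbdd k) (hTne n)
      (fun s hs => ⟨hs.1, fun F hF => (hs.2 F hF).trans hnk⟩)
  have propA : ∀ (n : ℕ) (F : Finset ℕ), (∀ j ∈ F, t n < a j) → F.card ≤ n := by
    intro n F hF
    rcases F.eq_empty_or_nonempty with rfl | hne
    · simp
    · have h1 : t n < F.inf' hne a := (Finset.lt_inf'_iff hne).2 hF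
      obtain ⟨s, hsT, hs⟩ := (csInf_lt_iff (hTbdd n) (hTne n)).1 h1
      exact hsT.2 F (fun j hj => lt_of_lt_of_le hs (Finset.inf'_le a hj))
  have hJfin : ∀ n, {j : ℕ | t n < a j}.Finite := by
    intro n
    rw [← Set.not_infinite]
    intro h
    obtain ⟨F, hFsub, hFcard⟩ := h.exists_subset_card_eq (n + 1)
    have := propA n F (fun j hj => hFsub hj)
    omega
  have propB : ∀ n : ℕ, 0 < t n →
      ∃ F : Finset ℕ, F.card = n + 1 ∧ ∀ j ∈ F, t n ≤ a j := by
    intro n htn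
    have hD : {j : ℕ | t n ≤ a j}.Finite := hfin (t n) htn
    by_cases hcard : n + 1 ≤ hD.toFinset.card
    · obtain ⟨F, hFsub, hFcard⟩ := Finset.exists_subset_card_eq hcard
      exact ⟨F, hFcard, fun j hj => hD.mem_toFinset.1 (hFsub hj)⟩
    · exfalso
      push_neg at hcard
      have hcard' : hD.toFinset.card ≤ n := by omega
      have hhalf : 0 < t n / 2 := by linarith
      have hE : {j : ℕ | t n / 2 ≤ a j}.Finite := hfin (t n / 2) hhalf
      set G : Finset ℕ := hE.toFinset.filter (fun j => a j < t n) with hG_def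
      set s : ℝ := G.fold max (t n / 2) a with hs_def
      have hs1 : t n / 2 ≤ s := (Finset.le_fold_max _).2 (Or.inl le_rfl)
      have hs2 : s < t n := (Finset.fold_max_lt _).2
        ⟨by linarith, fun j hj => (Finset.mem_filter.1 hj).2⟩
      have hsT : s ∈ T n := by
        refine ⟨by linarith, fun F hF => ?_⟩
        have hFD : F ⊆ hD.toFinset := by
          intro j hj
          rw [hD.mem_toFinset]
          simp only [Set.mem_setOf_eq]
          by_contra hlt
          push_neg at hlt
          have hjE : j ∈ hE.toFinset := hE.mem_toFinset.2 (by
            have := hF j hj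
            simp only [Set.mem_setOf_eq]
            linarith)
          have hjG : j ∈ G := Finset.mem_filter.2 ⟨hjE, hlt⟩
          have hle : a j ≤ s := ((Finset.fold_max_le _).1 le_rfl).2 j hjG
          exact absurd (hF j hj) (not_lt.2 hle)
        exact le_trans (Finset.card_le_card hFD) hcard'
      exact absurd (csInf_le (hTbdd n) hsT) (not_le.2 hs2)
  set w : ℕ → ℂ := fun j : ℕ => z j / ((((j : ℝ) ^ σ) : ℝ) : ℂ) with hw_def
  have haw : ∀ j, ‖w j‖ = a j / ((j : ℝ) ^ σ) := by
    intro j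
    rw [hw_def]
    simp only [norm_div, Complex.norm_real, Real.norm_eq_abs]
    rw [abs_of_nonneg (Real.rpow_nonneg (Nat.cast_nonneg j) σ)]
  have hd0 : ∀ n, 0 ≤ decRearr w n := by
    intro n
    apply Real.sInf_nonneg
    rintro x ⟨J, hJ, rfl⟩
    apply Real.sSup_nonneg
    rintro y ⟨j, hj, rfl⟩
    exact norm_nonneg _
  have hwkey : ∀ n : ℕ, decRearr w (n + 1) ≤
      t (n / 2) / (((max 1 (n / 2) : ℕ) : ℝ)) ^ σ := by
    intro n
    set k : ℕ := n / 2 with hk_def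
    set K : ℕ := max 1 k with hK_def
    have hK1 : 1 ≤ K := le_max_left _ _
    have hKpos : (0:ℝ) < (K : ℝ) := by exact_mod_cast hK1
    have hKσpos : (0:ℝ) < ((K:ℝ)) ^ σ := Real.rpow_pos_of_pos hKpos σ
    set Jk : Finset ℕ := (hJfin k).toFinset with hJk_def
    have hJkcard : Jk.card ≤ k := propA k Jk (fun j hj => (hJfin k).mem_toFinset.1 hj)
    set J : Finset ℕ := Finset.range k ∪ Jk with hJ_def
    have hJcard : J.card < n + 1 := by
      have h1 : J.card ≤ (Finset.range k).card + Jk.card := Finset.card_union_le _ _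
      rw [Finset.card_range] at h1
      have h2 : 2 * (n / 2) ≤ n := by omega
      omega
    set b : ℝ := t k / ((K:ℝ)) ^ σ with hb_def
    have hb0 : 0 ≤ b := div_nonneg (ht0 k) hKσpos.le
    have helem : ∀ j : ℕ, j ∉ J → ‖w j‖ ≤ b := by
      intro j hj
      rw [haw]
      have hj1 : j ∉ Finset.range k := fun h => hj (Finset.mem_union_left _ h)
      have hj2 : j ∉ Jk := fun h => hj (Finset.mem_union_right _ h)
      have hjk : k ≤ j := by
        by_contra h
        exact hj1 (Finset.mem_range.2 (by omega))
      have hza : a j ≤ t k := by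
        by_contra h
        exact hj2 ((hJfin k).mem_toFinset.2 (by
          simp only [Set.mem_setOf_eq]; linarith))
      rcases Nat.eq_zero_or_pos j with rfl | hjpos
      · simp only [Nat.cast_zero]
        rw [Real.zero_rpow (ne_of_gt hσpos), div_zero]
        exact hb0
      · have hKj : (K : ℝ) ≤ (j : ℝ) := by
          exact_mod_cast max_le hjpos hjk
        have hjσ : ((K:ℝ)) ^ σ ≤ ((j:ℝ)) ^ σ :=
          Real.rpow_le_rpow hKpos.le hKj hσpos.le
        exact div_le_div₀ (ht0 k) hza hKσpos hjσ
    have hsup : sSup ((fun j => ‖w j‖) '' {j : ℕ | j ∉ J}) ≤ b := by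
      apply Real.sSup_le _ hb0
      rintro y ⟨j, hj, rfl⟩
      exact helem j hj
    have hbdd' : BddBelow {u : ℝ | ∃ J' : Finset ℕ, J'.card < n + 1 ∧
        u = sSup ((fun j => ‖w j‖) '' {j : ℕ | j ∉ J'})} := by
      refine ⟨0, ?_⟩
      rintro x ⟨J', hJ', rfl⟩
      apply Real.sSup_nonneg
      rintro y ⟨j, hj, rfl⟩
      exact norm_nonneg _
    have hmem : sSup ((fun j => ‖w j‖) '' {j : ℕ | j ∉ J}) ∈
        {u : ℝ | ∃ J' : Finset ℕ, J'.card < n + 1 ∧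
          u = sSup ((fun j => ‖w j‖) '' {j : ℕ | j ∉ J'})} :=
      ⟨J, hJcard, rfl⟩
    exact le_trans (csInf_le hbdd' hmem) hsup
  set S : ℝ := ∑' j, a j ^ r with hS_def
  have hSnn : 0 ≤ S := tsum_nonneg (fun j => Real.rpow_nonneg (ha j) r)
  have hTpos : ∀ N : ℕ, (∀ n, n < N → 0 < t n) →
      ∑ n ∈ Finset.range N, t n ^ r ≤ S := by
    intro N hpos
    rcases Nat.eq_zero_or_pos N with rfl | hN
    · simpa using hSnn
    · have hΩ : {j : ℕ | t (N - 1) ≤ a j}.Finite := hfin _ (hpos (N-1) (by omega))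
      set D : ℕ → Finset ℕ := fun n => hΩ.toFinset.filter (fun j => t n ≤ a j) with hD_def
      have hmono : ∀ p p', p ≤ p' → p' < N → D p ⊆ D p' := by
        intro p p' hpp _ j hj
        rw [hD_def, Finset.mem_filter] at hj ⊢
        exact ⟨hj.1, le_trans (htanti p p' hpp) hj.2⟩
      have hcard : ∀ n, n < N → n + 1 ≤ (D n).card := by
        intro n hn
        obtain ⟨F, hFcard, hFle⟩ := propB n (hpos n hn)
        have hFD : F ⊆ D n := by
          intro j hj
          rw [hD_def, Finset.mem_filter]
          refine ⟨hΩ.mem_toFinset.2 ?_, hFle j hj⟩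
          simp only [Set.mem_setOf_eq]
          exact le_trans (htanti n (N - 1) (by omega)) (hFle j hj)
        calc n + 1 = F.card := hFcard.symm
          _ ≤ (D n).card := Finset.card_le_card hFD
      have hvg : ∀ n, n < N → ∀ j ∈ D n, t n ^ r ≤ a j ^ r := by
        intro n hn j hj
        rw [hD_def, Finset.mem_filter] at hj
        exact Real.rpow_le_rpow (ht0 n) hj.2 hrpos.le
      obtain ⟨C, _, _, hCsum⟩ :=
        greedy_aux (fun n => t n ^ r) (fun j => a j ^ r) D N hmono hcard hvg
      exact hCsum.trans (Summable.sum_le_tsum C (fun j _ => Real.rpow_nonneg (ha j) r) hz)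
  have hTsum : ∀ N : ℕ, ∑ n ∈ Finset.range N, t n ^ r ≤ S := by
    intro N
    by_cases hpos : ∀ n, n < N → 0 < t n
    · exact hTpos N hpos
    · push_neg at hpos
      obtain ⟨n1, hn1N, hn1⟩ := hpos
      have hP : ∃ n, t n ≤ 0 := ⟨n1, hn1⟩
      set n₀ := Nat.find hP with hn₀_def
      have hfind : t n₀ ≤ 0 := Nat.find_spec hP
      have hn₀le : n₀ ≤ n1 := Nat.find_le hn1
      have hposlt : ∀ n, n < n₀ → 0 < t n := by
        intro n hn
        have h := Nat.find_min hP hn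
        push_neg at h
        exact lt_of_le_of_ne (ht0 n) (fun he => absurd he.symm (ne_of_gt h))
      have hzero : ∀ n, n₀ ≤ n → t n ^ r = 0 := by
        intro n hn
        have h1 : t n ≤ 0 := le_trans (htanti n₀ n hn) hfind
        have h2 : t n = 0 := le_antisymm h1 (ht0 n)
        rw [h2]
        exact Real.zero_rpow hr0
      have hsub : Finset.range n₀ ⊆ Finset.range N := Finset.range_subset_range.2 (by omega)
      have heq : ∑ n ∈ Finset.range N, t n ^ r = ∑ n ∈ Finset.range n₀, t n ^ r := by
        symm
        apply Finset.sum_subset hsub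
        intro x _ hx
        exact hzero x (Nat.le_of_not_lt (fun h => hx (Finset.mem_range.2 h)))
      rw [heq]
      exact hTpos n₀ hposlt
  set Cst : ℝ := ((4:ℝ) ^ σ) ^ r with hCst_def
  have hCstnn : 0 ≤ Cst := Real.rpow_nonneg (Real.rpow_nonneg (by norm_num) σ) r
  have hfbound : ∀ n : ℕ,
      (decRearr w (n+1) * ((n:ℝ) + 1) ^ σ) ^ r ≤ Cst * t (n / 2) ^ r := by
    intro n
    set k : ℕ := n / 2 with hk_def
    set K : ℕ := max 1 k with hK_def
    have hK1 : 1 ≤ K := le_max_left _ _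
    have hKpos : (0:ℝ) < (K:ℝ) := by exact_mod_cast hK1
    have hKσpos : (0:ℝ) < ((K:ℝ)) ^ σ := Real.rpow_pos_of_pos hKpos σ
    have h4K : ((n:ℝ) + 1) ≤ 4 * (K:ℝ) := by
      have h : n + 1 ≤ 4 * K := by
        rcases le_or_gt 1 (n / 2) with hcase | hcase
        · have hKe : K = n / 2 := max_eq_right hcase
          omega
        · have hKe : K = 1 := max_eq_left (by omega)
          omega
      exact_mod_cast h
    have hnσ : ((n:ℝ) + 1) ^ σ ≤ (4:ℝ) ^ σ * ((K:ℝ)) ^ σ := by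
      rw [← Real.mul_rpow (by norm_num) hKpos.le]
      exact Real.rpow_le_rpow (by positivity) h4K hσpos.le
    have hchain : decRearr w (n+1) * ((n:ℝ) + 1) ^ σ ≤ t k * (4:ℝ) ^ σ := by
      have h1 : decRearr w (n+1) * ((n:ℝ) + 1) ^ σ ≤
          (t k / ((K:ℝ)) ^ σ) * ((4:ℝ) ^ σ * ((K:ℝ)) ^ σ) :=
        mul_le_mul (hwkey n) hnσ (Real.rpow_nonneg (by positivity) σ)
          (div_nonneg (ht0 k) hKσpos.le)
      have h2 : (t k / ((K:ℝ)) ^ σ) * ((4:ℝ) ^ σ * ((K:ℝ)) ^ σ) = t k * (4:ℝ) ^ σ := by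
        field_simp
      linarith
    calc (decRearr w (n+1) * ((n:ℝ) + 1) ^ σ) ^ r
        ≤ (t k * (4:ℝ) ^ σ) ^ r :=
          Real.rpow_le_rpow (mul_nonneg (hd0 _) (Real.rpow_nonneg (by positivity) σ))
            hchain hrpos.le
      _ = t k ^ r * Cst := by
          rw [Real.mul_rpow (ht0 k) (Real.rpow_nonneg (by norm_num) σ)]
      _ = Cst * t k ^ r := mul_comm _ _
  apply summable_of_sum_range_le (c := Cst * (2 * S))
  · intro n
    exact Real.rpow_nonneg
      (mul_nonneg (hd0 _) (Real.rpow_nonneg (by positivity) σ)) r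
  · intro N
    calc ∑ n ∈ Finset.range N, (decRearr w (n+1) * ((n:ℝ)+1) ^ σ) ^ r
        ≤ ∑ n ∈ Finset.range N, Cst * t (n / 2) ^ r :=
          Finset.sum_le_sum (fun n _ => hfbound n)
      _ = Cst * ∑ n ∈ Finset.range N, t (n / 2) ^ r := by rw [Finset.mul_sum]
      _ ≤ Cst * ∑ n ∈ Finset.range (2 * N), t (n / 2) ^ r := by
          apply mul_le_mul_of_nonneg_left _ hCstnn
          apply Finset.sum_le_sum_of_subset_of_nonneg (Finset.range_subset_range.2 (by omega))
          intro i _ _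
          exact Real.rpow_nonneg (ht0 _) r
      _ = Cst * (2 * ∑ k ∈ Finset.range N, t k ^ r) := by rw [sum_halves_aux (fun i => t i ^ r) N]
      _ ≤ Cst * (2 * S) := by
          apply mul_le_mul_of_nonneg_left _ hCstnn
          linarith [hTsum N]
end

section
/- Let $q > 1$ with conjugate $q'$, and let $z \in \mathbb{C}^{\mathbb{N}}$ be a sequence such that $z_n = \frac{w_n}{n^{1/q'}\log(n+2)^{\theta}}$ for some $w \in \ell_q$ with $\|w\|_{\ell_q} \le 1$ and some $\theta > 0$. Then for all $n$, $\sum_{l=1}^n z_l^* \le \left(\sum_{l=1}^n \frac{1}{l\,\log(l+2)^{q'\theta}}\right)^{1/q'}$. -/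
open Finset

/-- Sum of an antitone nonnegative function over a finset of positive naturals of card ≤ n
is at most the sum over `Icc 1 n`. -/
lemma sum_set_le_sum_Icc (a : ℕ → ℝ) (ha : ∀ i j : ℕ, 1 ≤ i → i ≤ j → a j ≤ a i)
    (ha0 : ∀ i : ℕ, 0 ≤ a i) :
    ∀ n : ℕ, ∀ T : Finset ℕ, (∀ j ∈ T, 1 ≤ j) → T.card ≤ n →
      ∑ j ∈ T, a j ≤ ∑ l ∈ Finset.Icc 1 n, a l := by
  intro n
  induction n with
  | zero =>
    intro T hT hcard
    have : T = ∅ := Finset.card_eq_zero.mp (Nat.le_zero.mp hcard)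
    simp [this]
  | succ n ih =>
    intro T hT hcard
    rcases T.eq_empty_or_nonempty with rfl | hne
    · exact Finset.sum_nonneg fun l _ => ha0 l
    · set M := T.max' hne with hM
      have hMT : M ∈ T := T.max'_mem hne
      by_cases hMn : M ≤ n
      · -- T ⊆ Icc 1 n ⊆ Icc 1 (n+1)
        refine Finset.sum_le_sum_of_subset_of_nonneg ?_ (fun i _ _ => ha0 i)
        intro j hj
        exact Finset.mem_Icc.mpr ⟨hT j hj, le_trans (le_trans (T.le_max' j hj) hMn) (Nat.le_succ n)⟩
      · push_neg at hMn
        have h1 : ∑ j ∈ T.erase M, a j ≤ ∑ l ∈ Finset.Icc 1 n, a l := by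
          refine ih (T.erase M) (fun j hj => hT j (Finset.mem_of_mem_erase hj)) ?_
          have := Finset.card_erase_of_mem hMT
          omega
        have h2 : a M ≤ a (n + 1) := ha (n + 1) M (Nat.le_add_left 1 n) hMn
        calc ∑ j ∈ T, a j = ∑ j ∈ T.erase M, a j + a M :=
              (Finset.sum_erase_add T a hMT).symm
          _ ≤ ∑ l ∈ Finset.Icc 1 n, a l + a (n + 1) := add_le_add h1 h2
          _ = ∑ l ∈ Finset.Icc 1 (n + 1), a l := by
              rw [Finset.sum_Icc_succ_top (Nat.le_add_left 1 n)]

/-- Greedy selection: partial sums of the decreasing rearrangement are nearly realized by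
sums over finite sets. -/
lemma exists_finset_decRearr (z : ℕ → ℂ) (M : ℝ) (hM : ∀ j, ‖z j‖ ≤ M)
    (ε : ℝ) (hε : 0 < ε) :
    ∀ n : ℕ, ∃ S : Finset ℕ, S.card = n ∧
      ∑ l ∈ Finset.Icc 1 n, decRearr z l ≤ ∑ j ∈ S, ‖z j‖ + n * ε := by
  have hbdd : ∀ J : Finset ℕ, BddAbove ((fun j => ‖z j‖) '' {j : ℕ | j ∉ J}) := by
    intro J
    exact ⟨M, by rintro t ⟨j, _, rfl⟩; exact hM j⟩
  have hne : ∀ J : Finset ℕ, ((fun j => ‖z j‖) '' {j : ℕ | j ∉ J}).Nonempty := by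
    intro J
    obtain ⟨j, hj⟩ := Infinite.exists_notMem_finset J
    exact ⟨_, ⟨j, hj, rfl⟩⟩
  have hbddBelow : ∀ n : ℕ, BddBelow {t : ℝ | ∃ J : Finset ℕ, J.card < n ∧
      t = sSup ((fun j => ‖z j‖) '' {j : ℕ | j ∉ J})} := by
    intro n
    refine ⟨0, ?_⟩
    rintro t ⟨J, _, rfl⟩
    obtain ⟨j, hj⟩ := Infinite.exists_notMem_finset J
    exact le_trans (norm_nonneg (z j)) (le_csSup (hbdd J) ⟨j, hj, rfl⟩)
  intro n
  induction n with
  | zero => exact ⟨∅, rfl, by simp⟩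
  | succ n ih =>
    obtain ⟨S, hScard, hSsum⟩ := ih
    have hmem : sSup ((fun j => ‖z j‖) '' {j : ℕ | j ∉ S}) ∈
        {t : ℝ | ∃ J : Finset ℕ, J.card < n + 1 ∧
          t = sSup ((fun j => ‖z j‖) '' {j : ℕ | j ∉ J})} :=
      ⟨S, by omega, rfl⟩
    have hle : decRearr z (n + 1) ≤ sSup ((fun j => ‖z j‖) '' {j : ℕ | j ∉ S}) :=
      csInf_le (hbddBelow (n + 1)) hmem
    obtain ⟨t, ht, htgt⟩ := exists_lt_of_lt_csSup (hne S)
      (show sSup ((fun j => ‖z j‖) '' {j : ℕ | j ∉ S}) - ε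
        < sSup ((fun j => ‖z j‖) '' {j : ℕ | j ∉ S}) by linarith)
    obtain ⟨j, hjS, rfl⟩ := ht
    refine ⟨insert j S, ?_, ?_⟩
    · rw [Finset.card_insert_of_notMem hjS, hScard]
    · have hstep : decRearr z (n + 1) ≤ ‖z j‖ + ε := by linarith
      rw [Finset.sum_Icc_succ_top (Nat.le_add_left 1 n), Finset.sum_insert hjS]
      push_cast
      linarith

/-- If `q > 1` with conjugate `q'`, `θ > 0`, `w ∈ ℓ_q` with `‖w‖_q ≤ 1` (1-indexed), and
`z_n = w_n / (n^{1/q'} log(n+2)^θ)`, then for all `n ≥ 1`,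
`∑_{l=1}^n z_l^* ≤ (∑_{l=1}^n 1/(l log(l+2)^{q'θ}))^{1/q'}`. -/
theorem rearranged_partial_sum_bound (q q' θ : ℝ) (hq : 1 < q)
    (hq' : 1 / q + 1 / q' = 1) (hθ : 0 < θ)
    (w : ℕ → ℂ) (hw : Summable fun n : ℕ => ‖w (n + 1)‖ ^ q)
    (hw1 : ∑' n : ℕ, ‖w (n + 1)‖ ^ q ≤ 1)
    (z : ℕ → ℂ)
    (hz : ∀ n : ℕ, z n = w n / ((((n : ℝ) ^ (1 / q') * Real.log ((n : ℝ) + 2) ^ θ) : ℝ) : ℂ)) :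
    ∀ n : ℕ, 1 ≤ n →
      ∑ l ∈ Finset.Icc 1 n, decRearr z l ≤
        (∑ l ∈ Finset.Icc 1 n, 1 / ((l : ℝ) * Real.log ((l : ℝ) + 2) ^ (q' * θ))) ^ (1 / q') := by
  have hq0 : 0 < q := lt_trans one_pos hq
  have h1q : 1 / q < 1 := (div_lt_one hq0).mpr hq
  have h2q : 0 < 1 / q := by positivity
  have h3 : 0 < 1 / q' := by linarith
  have hq'0 : 0 < q' := one_div_pos.mp h3
  have hq'1 : 1 < q' := (div_lt_one hq'0).mp (by linarith)
  have hpq : q.HolderConjugate q' := Real.holderConjugate_iff.mpr ⟨hq, by rw [← one_div, ← one_div]; exact hq'⟩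
  -- log (j + 2) ≥ 1 for j ≥ 1
  have hlog1 : ∀ j : ℕ, 1 ≤ j → 1 ≤ Real.log ((j : ℝ) + 2) := by
    intro j hj
    have h3 : (3 : ℝ) ≤ (j : ℝ) + 2 := by
      have : (1 : ℝ) ≤ (j : ℝ) := by exact_mod_cast hj
      linarith
    have : Real.exp 1 ≤ (j : ℝ) + 2 :=
      le_trans (le_trans Real.exp_one_lt_d9.le (by norm_num)) h3
    calc (1 : ℝ) = Real.log (Real.exp 1) := (Real.log_exp 1).symm
      _ ≤ Real.log ((j : ℝ) + 2) := Real.log_le_log (Real.exp_pos 1) this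
  have hlogpos : ∀ j : ℕ, 0 < Real.log ((j : ℝ) + 2) := by
    intro j
    apply Real.log_pos
    have : (0 : ℝ) ≤ (j : ℝ) := Nat.cast_nonneg j
    linarith
  -- |w j| ≤ 1 for j ≥ 1
  have hwle : ∀ j : ℕ, 1 ≤ j → ‖w j‖ ≤ 1 := by
    intro j hj
    have hterm : ‖w ((j - 1) + 1)‖ ^ q ≤ 1 :=
      le_trans (hw.le_tsum (j - 1) fun i _ => by positivity) hw1
    rw [Nat.sub_add_cancel hj] at hterm
    by_contra h
    push_neg at h
    have : (1 : ℝ) < ‖w j‖ ^ q := Real.one_lt_rpow_iff_of_pos (by positivity) |>.mpr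
      (Or.inl ⟨h, hq0⟩)
    linarith
  -- z 0 = 0
  have hz0 : z 0 = 0 := by
    have h0 : ((0:ℕ):ℝ) ^ (1 / q') = 0 := by
      rw [Nat.cast_zero]; exact Real.zero_rpow (by positivity)
    rw [hz 0, h0, zero_mul, Complex.ofReal_zero, div_zero]
  -- |z j| = |w j| * b j for j ≥ 1, where b j = ((j:ℝ)^(1/q') * log(j+2)^θ)⁻¹
  set b : ℕ → ℝ := fun j => (((j : ℝ) ^ (1 / q') * Real.log ((j : ℝ) + 2) ^ θ))⁻¹ with hb
  have hbpos : ∀ j : ℕ, 1 ≤ j → 0 < b j := by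
    intro j hj
    have h1 : (0 : ℝ) < (j : ℝ) := by exact_mod_cast hj
    have := hlogpos j
    positivity
  have hzabs : ∀ j : ℕ, 1 ≤ j → ‖z j‖ = ‖w j‖ * b j := by
    intro j hj
    rw [hz j, norm_div, Complex.norm_real, Real.norm_eq_abs, div_eq_mul_inv, hb]
    congr 1
    rw [abs_of_pos]
    have h1 : (0 : ℝ) < (j : ℝ) := by exact_mod_cast hj
    have := hlogpos j
    positivity
  have hble : ∀ j : ℕ, 1 ≤ j → b j ≤ 1 := by
    intro j hj
    rw [hb]
    have h1 : (1 : ℝ) ≤ (j : ℝ) ^ (1 / q') :=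
      Real.one_le_rpow (by exact_mod_cast hj) (by positivity)
    have h2 : (1 : ℝ) ≤ Real.log ((j : ℝ) + 2) ^ θ :=
      Real.one_le_rpow (hlog1 j hj) hθ.le
    have : (1 : ℝ) ≤ (j : ℝ) ^ (1 / q') * Real.log ((j : ℝ) + 2) ^ θ := by nlinarith
    exact inv_le_one_of_one_le₀ this
  have hzle : ∀ j : ℕ, ‖z j‖ ≤ 1 := by
    intro j
    rcases Nat.eq_zero_or_pos j with rfl | hj
    · rw [hz0]; simp
    · rw [hzabs j hj]
      calc ‖w j‖ * b j ≤ 1 * 1 :=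
        mul_le_mul (hwle j hj) (hble j hj) (hbpos j hj).le zero_le_one
        _ = 1 := one_mul 1
  -- b j ^ q' = 1 / (j * log(j+2)^(q'θ)) for j ≥ 1
  set a : ℕ → ℝ := fun l => 1 / ((l : ℝ) * Real.log ((l : ℝ) + 2) ^ (q' * θ)) with hadef
  have hbq' : ∀ j : ℕ, 1 ≤ j → b j ^ q' = a j := by
    intro j hj
    have h1 : (0 : ℝ) < (j : ℝ) := by exact_mod_cast hj
    have h2 := hlogpos j
    have hx : (0:ℝ) ≤ (j:ℝ) ^ (1 / q') := by positivity
    have hy : (0:ℝ) ≤ Real.log ((j:ℝ) + 2) ^ θ := by positivity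
    simp only [hb, hadef]
    rw [Real.inv_rpow (by positivity), Real.mul_rpow hx hy,
      ← Real.rpow_mul (Nat.cast_nonneg j), ← Real.rpow_mul h2.le,
      one_div_mul_cancel hq'0.ne', Real.rpow_one, mul_comm θ q', one_div]
  -- antitone and nonneg of a on [1, ∞)
  have ha_anti : ∀ i j : ℕ, 1 ≤ i → i ≤ j → a j ≤ a i := by
    intro i j hi hij
    have h1 : (0:ℝ) < (i:ℝ) := by exact_mod_cast hi
    have h2 := hlogpos i
    have h3 := hlogpos j
    apply one_div_le_one_div_of_le (by positivity)
    have hcast : (i:ℝ) ≤ (j:ℝ) := by exact_mod_cast hij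
    have hlog : Real.log ((i:ℝ) + 2) ^ (q' * θ) ≤ Real.log ((j:ℝ) + 2) ^ (q' * θ) :=
      Real.rpow_le_rpow h2.le (Real.log_le_log (by linarith) (by linarith)) (by positivity)
    have hp1 : (0:ℝ) ≤ Real.log ((i:ℝ) + 2) ^ (q' * θ) := by positivity
    nlinarith
  have ha_nonneg : ∀ i : ℕ, 0 ≤ a i := by
    intro i
    apply div_nonneg zero_le_one
    have := (hlogpos i).le
    positivity
  -- main argument
  intro n hn
  refine le_of_forall_pos_le_add fun ε hε => ?_
  obtain ⟨S, hScard, hSsum⟩ := exists_finset_decRearr z 1 hzle (ε / n) (by positivity) n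
  have hnR : (0:ℝ) < (n:ℝ) := by exact_mod_cast hn
  have hSsum' : ∑ l ∈ Finset.Icc 1 n, decRearr z l ≤ ∑ j ∈ S, ‖z j‖ + ε := by
    have : (n:ℝ) * (ε / n) = ε := by field_simp
    linarith [hSsum, this.ge]
  set T := S.filter (fun j => 1 ≤ j) with hT
  have hTmem : ∀ j ∈ T, 1 ≤ j := fun j hj => (Finset.mem_filter.mp hj).2
  have hTS : ∑ j ∈ S, ‖z j‖ = ∑ j ∈ T, ‖z j‖ := by
    rw [hT]
    refine (Finset.sum_filter_of_ne fun j _ hne => ?_).symm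
    rcases Nat.eq_zero_or_pos j with rfl | h
    · exact absurd (by rw [hz0]; simp) hne
    · exact h
  have hTcard : T.card ≤ n := hScard ▸ Finset.card_filter_le S _
  -- Hölder on T
  have hzw : ∑ j ∈ T, ‖z j‖ = ∑ j ∈ T, ‖w j‖ * b j :=
    Finset.sum_congr rfl fun j hj => hzabs j (hTmem j hj)
  have hholder : ∑ j ∈ T, ‖w j‖ * b j ≤
      (∑ j ∈ T, ‖w j‖ ^ q) ^ (1/q) * (∑ j ∈ T, b j ^ q') ^ (1/q') :=
    Real.inner_le_Lp_mul_Lq_of_nonneg T hpq (fun j _ => norm_nonneg _)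
      (fun j hj => (hbpos j (hTmem j hj)).le)
  -- first factor ≤ 1
  have hfac1 : (∑ j ∈ T, ‖w j‖ ^ q) ^ (1/q) ≤ 1 := by
    have hsum1 : ∑ j ∈ T, ‖w j‖ ^ q ≤ 1 := by
      have hinj : Set.InjOn (fun j => j - 1) T := by
        intro j1 h1 j2 h2 h
        have := hTmem j1 h1
        have := hTmem j2 h2
        simp only at h
        omega
      calc ∑ j ∈ T, ‖w j‖ ^ q
          = ∑ i ∈ T.image (fun j => j - 1), ‖w (i + 1)‖ ^ q := by
            rw [Finset.sum_image hinj]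
            exact Finset.sum_congr rfl fun j hj => by
              rw [Nat.sub_add_cancel (hTmem j hj)]
        _ ≤ ∑' i : ℕ, ‖w (i + 1)‖ ^ q :=
            hw.sum_le_tsum _ (fun i _ => by positivity)
        _ ≤ 1 := hw1
    exact Real.rpow_le_one (Finset.sum_nonneg fun j _ => by positivity) hsum1 (by positivity)
  -- second factor
  have hfac2 : (∑ j ∈ T, b j ^ q') ^ (1/q') ≤ (∑ l ∈ Finset.Icc 1 n, a l) ^ (1/q') := by
    apply Real.rpow_le_rpow (Finset.sum_nonneg fun j hj => Real.rpow_nonneg (hbpos j (hTmem j hj)).le _)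
    · calc ∑ j ∈ T, b j ^ q' = ∑ j ∈ T, a j :=
            Finset.sum_congr rfl fun j hj => hbq' j (hTmem j hj)
        _ ≤ ∑ l ∈ Finset.Icc 1 n, a l := sum_set_le_sum_Icc a ha_anti ha_nonneg n T hTmem hTcard
    · positivity
  have hkey : ∑ j ∈ S, ‖z j‖ ≤ (∑ l ∈ Finset.Icc 1 n, a l) ^ (1/q') := by
    rw [hTS, hzw]
    calc ∑ j ∈ T, ‖w j‖ * b j
        ≤ (∑ j ∈ T, ‖w j‖ ^ q) ^ (1/q) * (∑ j ∈ T, b j ^ q') ^ (1/q') := hholder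
      _ ≤ 1 * (∑ l ∈ Finset.Icc 1 n, a l) ^ (1/q') := by
          apply mul_le_mul hfac1 hfac2 (Real.rpow_nonneg
            (Finset.sum_nonneg fun j hj => Real.rpow_nonneg (hbpos j (hTmem j hj)).le _) _)
            zero_le_one
      _ = (∑ l ∈ Finset.Icc 1 n, a l) ^ (1/q') := one_mul _
  linarith
end

section
/- Let $z \in \mathbb{C}^n$ be decreasing with $\|z\|_{m_{\Psi_r}} \le 1$ for $1 < r < 2$. Then for every $1 \le j \le n$: $|z_j| \left(\sum_{k=j}^n |z_k|^r\right)^{1/r} \le 2^{r+2}\,\frac{2r}{(r-1)^2}\, \frac{\log(j+1)^{2/r'}}{j^{1 + 1/r'}}$. -/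
open Finset



lemma log16_ge_two : (2:ℝ) ≤ Real.log 16 := by
  rw [Real.le_log_iff_exp_le (by norm_num)]
  have h := Real.exp_one_lt_d9
  have h2 : Real.exp 2 = Real.exp 1 * Real.exp 1 := by
    rw [← Real.exp_add]; norm_num
  nlinarith [Real.exp_pos 1]

lemma key_step (t : ℝ) (ht0 : 0 < t) (ht1 : t ≤ 1) (a : ℝ) (ha : 1 ≤ a) :
    Real.log (a+1) ^ t / a ^ (t+1) ≤
      (2 ^ (t+3) / t) * (Real.log (8*(a+1)) ^ t / a ^ t
        - Real.log (8*(a+2)) ^ t / (a+1) ^ t) := by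
  have ha0 : (0:ℝ) < a := by linarith
  have hb0 : (0:ℝ) < a + 1 := by linarith
  set b := a + 1 with hb_def
  set u := Real.log (8*(a+1)) with hu_def
  set v := Real.log (8*(a+2)) with hv_def
  have hu2 : 2 ≤ u := by
    calc (2:ℝ) ≤ Real.log 16 := log16_ge_two
    _ ≤ u := Real.log_le_log (by norm_num) (by linarith)
  have hu0 : 0 < u := by linarith
  set X := u ^ t with hX_def
  set Y := v ^ t with hY_def
  set P := a ^ t with hP_def
  set Q := b ^ t with hQ_def
  have hX0 : 0 < X := Real.rpow_pos_of_pos hu0 t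
  have hP0 : 0 < P := Real.rpow_pos_of_pos ha0 t
  have hQ0 : 0 < Q := Real.rpow_pos_of_pos hb0 t
  have huv : u ≤ v := Real.log_le_log (by positivity) (by linarith)
  have hvu : v - u ≤ 1 / b := by
    have h1 : v - u = Real.log ((8*(a+2)) / (8*(a+1))) := by
      rw [Real.log_div (by positivity) (by positivity)]
    have h2 : Real.log ((8*(a+2)) / (8*(a+1))) ≤ (8*(a+2)) / (8*(a+1)) - 1 :=
      Real.log_le_sub_one_of_pos (by positivity)
    have h3 : (8*(a+2)) / (8*(a+1)) - 1 = 1/b := by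
      rw [hb_def]; field_simp; ring
    linarith
  set α := t / (2*b) with hα_def
  set β := t / b with hβ_def
  have hα0 : 0 ≤ α := by positivity
  have hβ1 : β < 1 := by
    rw [hβ_def, div_lt_one hb0]; linarith
  have hβ0 : 0 ≤ β := by positivity
  have h1 : Y ≤ X * (1 + α) := by
    have hvu0 : (0:ℝ) ≤ v / u := div_nonneg (by linarith) hu0.le
    have hb' : Y = X * (v/u) ^ t := by
      rw [hY_def, hX_def, ← Real.mul_rpow hu0.le hvu0]
      rw [mul_div_cancel₀ _ hu0.ne']
    rw [hb']
    have hvu' : v / u = 1 + (v - u) / u := by field_simp; ring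
    have hbern : (v/u) ^ t ≤ 1 + t * ((v-u)/u) := by
      rw [hvu']
      have hnn : (0:ℝ) ≤ (v-u)/u := div_nonneg (by linarith) hu0.le
      exact rpow_one_add_le_one_add_mul_self (by linarith) ht0.le ht1
    have h4 : t * ((v-u)/u) ≤ α := by
      have h5 : (v-u)/u ≤ (1/b)/2 :=
        div_le_div₀ (by positivity) hvu (by norm_num) hu2
      calc t * ((v-u)/u) ≤ t * ((1/b)/2) := by
            exact mul_le_mul_of_nonneg_left h5 ht0.le
        _ = α := by rw [hα_def]; field_simp
    calc X * (v/u)^t ≤ X * (1 + t*((v-u)/u)) :=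
          mul_le_mul_of_nonneg_left hbern hX0.le
      _ ≤ X * (1 + α) := mul_le_mul_of_nonneg_left (by linarith) hX0.le
  have hPQ : P ≤ (1 - β) * Q := by
    have hab : (a/b) ^ t = P / Q := Real.div_rpow ha0.le hb0.le t
    have hs : -1 ≤ a/b - 1 := by
      have : 0 < a/b := by positivity
      linarith
    have hbern : (a/b) ^ t ≤ 1 - β := by
      have h7 : 1 + t * (a/b - 1) = 1 - β := by
        rw [hβ_def, hb_def]; field_simp; ring
      calc (a/b)^t = (1 + (a/b-1))^t := by ring_nf
        _ ≤ 1 + t * (a/b - 1) := rpow_one_add_le_one_add_mul_self hs ht0.le ht1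
        _ = 1 - β := h7
    rw [hab, div_le_iff₀ hQ0] at hbern
    linarith
  have hYQ : Y / Q ≤ X * (1+α) * (1-β) / P := by
    rw [div_le_div_iff₀ hQ0 hP0]
    calc Y * P ≤ (X * (1+α)) * ((1-β) * Q) :=
          mul_le_mul h1 hPQ hP0.le (by positivity)
      _ = X * (1+α) * (1-β) * Q := by ring
  have hdiff : X/P * α ≤ X/P - Y/Q := by
    have hge : α ≤ 1 - (1+α)*(1-β) := by
      have he : 1 - (1+α)*(1-β) = α + α*β := by
        rw [hα_def, hβ_def]; field_simp; ring
      have : 0 ≤ α*β := mul_nonneg hα0 hβ0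
      rw [he]; linarith
    have h8 : X/P * α ≤ X/P * (1 - (1+α)*(1-β)) :=
      mul_le_mul_of_nonneg_left hge (by positivity)
    have h9 : X/P * (1 - (1+α)*(1-β)) = X/P - X*(1+α)*(1-β)/P := by
      field_simp
    linarith [hYQ]
  have h4c : (4:ℝ) ≤ 2 ^ (t+3) := by
    have h30 : (2:ℝ) ^ ((3:ℕ):ℝ) ≤ 2 ^ (t+3) :=
      Real.rpow_le_rpow_of_exponent_le one_le_two (by push_cast; linarith)
    rw [Real.rpow_natCast] at h30
    norm_num at h30
    linarith
  have hA : (2:ℝ) ^ (t+3) / t * (X/P * α) = 2 ^ (t+3) * X / (P * (2*b)) := by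
    rw [hα_def]; field_simp
  have hL : Real.log (a+1) ^ t ≤ X := by
    rw [hX_def]
    apply Real.rpow_le_rpow (Real.log_nonneg (by linarith)) _ ht0.le
    exact Real.log_le_log (by linarith) (by linarith)
  have hpow : a ^ (t+1) = P * a := by
    rw [hP_def, Real.rpow_add ha0, Real.rpow_one]
  calc Real.log (a+1) ^ t / a ^ (t+1)
      ≤ X / (P * a) := by rw [hpow]; gcongr
    _ ≤ 2 ^ (t+3) * X / (P * (2*b)) := by
        rw [div_le_div_iff₀ (by positivity) (by positivity)]
        have h2b : 2*b ≤ 4*a := by rw [hb_def]; linarith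
        nlinarith [mul_le_mul_of_nonneg_left h2b (mul_pos hX0 hP0).le,
          mul_le_mul_of_nonneg_right h4c (mul_pos (mul_pos hX0 hP0) ha0).le]
    _ = 2 ^ (t+3) / t * (X/P * α) := hA.symm
    _ ≤ 2 ^ (t+3) / t * (X/P - Y/Q) :=
        mul_le_mul_of_nonneg_left hdiff (by positivity)

/-- For `1 < r < 2` and a decreasing `z ∈ ℂ^n` (1-indexed) with `‖z‖_{m_{Ψ_r}} ≤ 1`,
for every `1 ≤ j ≤ n`:
`|z_j| (∑_{k=j}^n |z_k|^r)^{1/r} ≤ 2^{r+2} (2r/(r-1)^2) log(j+1)^{2/r'} / j^{1+1/r'}`. -/theorem coordinate_times_tail_bound (r r' : ℝ) (n : ℕ)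
    (hr : 1 < r) (hr2 : r < 2) (hconj : 1 / r + 1 / r' = 1)
    (z : ℕ → ℂ)
    (hdec : ∀ i j : ℕ, 1 ≤ i → i ≤ j → j ≤ n → ‖z j‖ ≤ ‖z i‖)
    (hK : ∀ k : ℕ, 1 ≤ k → k ≤ n →
      ∑ l ∈ Finset.Icc 1 k, ‖z l‖ ≤ Real.log ((k : ℝ) + 1) ^ (1 - 1 / r)) :
    ∀ j : ℕ, 1 ≤ j → j ≤ n →
      ‖z j‖ * (∑ k ∈ Finset.Icc j n, ‖z k‖ ^ r) ^ (1 / r) ≤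
        2 ^ (r + 2) * (2 * r / (r - 1) ^ 2) *
          Real.log ((j : ℝ) + 1) ^ (2 / r') / (j : ℝ) ^ (1 + 1 / r') := by
  intro j hj1 hjn
  have hr0 : (0:ℝ) < r := by linarith
  set t := r - 1 with ht_def
  have ht0 : 0 < t := by rw [ht_def]; linarith
  have ht1 : t ≤ 1 := by rw [ht_def]; linarith
  set A : ℝ := 2 ^ (t+3) / t with hA_def
  have h2t3 : (1:ℝ) ≤ 2 ^ (t+3) := by
    have := Real.rpow_le_rpow_of_exponent_le (one_le_two (α := ℝ)) (by linarith : (0:ℝ) ≤ t+3)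
    rwa [Real.rpow_zero] at this
  have hA0 : 0 < A := by rw [hA_def]; positivity
  have h1r' : 1/r' = 1 - 1/r := by linarith
  -- pointwise bound
  have hzk : ∀ k : ℕ, 1 ≤ k → k ≤ n →
      ‖z k‖ ≤ Real.log ((k:ℝ)+1) ^ (1-1/r) / (k:ℝ) := by
    intro k hk1 hkn
    have hk0 : (0:ℝ) < (k:ℝ) := by exact_mod_cast hk1
    have hcard : (Finset.Icc 1 k).card = k := by rw [Nat.card_Icc]; omega
    have hlb : (k:ℝ) * ‖z k‖ ≤ ∑ l ∈ Finset.Icc 1 k, ‖z l‖ := by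
      have h := Finset.card_nsmul_le_sum (Finset.Icc 1 k) (fun l => ‖z l‖)
        (‖z k‖)
        (fun l hl => hdec l k (Finset.mem_Icc.mp hl).1 (Finset.mem_Icc.mp hl).2 hkn)
      rwa [hcard, nsmul_eq_mul] at h
    rw [le_div_iff₀ hk0]
    calc ‖z k‖ * k = (k:ℝ) * ‖z k‖ := by ring
      _ ≤ ∑ l ∈ Finset.Icc 1 k, ‖z l‖ := hlb
      _ ≤ Real.log ((k:ℝ)+1) ^ (1-1/r) := hK k hk1 hkn
  -- telescoping function
  set g : ℕ → ℝ := fun m => Real.log (8*((m:ℝ)+1)) ^ t / (m:ℝ) ^ t with hg_def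
  have hg_nonneg : ∀ m : ℕ, 0 ≤ g m := by
    intro m
    apply div_nonneg _ (Real.rpow_nonneg (Nat.cast_nonneg m) t)
    exact Real.rpow_nonneg (Real.log_nonneg (by push_cast; linarith [Nat.cast_nonneg (α := ℝ) m])) t
  have hg1 : ∀ k : ℕ, g (k+1) = Real.log (8*((k:ℝ)+2)) ^ t / ((k:ℝ)+1) ^ t := by
    intro k
    simp only [hg_def, Nat.cast_add, Nat.cast_one]
    rw [show (k:ℝ)+1+1 = (k:ℝ)+2 by ring]
  -- term bound
  have hterm : ∀ k : ℕ, k ∈ Finset.Icc j n →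
      ‖z k‖ ^ r ≤ A * (g k - g (k+1)) := by
    intro k hk
    obtain ⟨hjk, hkn⟩ := Finset.mem_Icc.mp hk
    have hk1 : 1 ≤ k := le_trans hj1 hjk
    have hk1' : (1:ℝ) ≤ (k:ℝ) := by exact_mod_cast hk1
    have hk0 : (0:ℝ) < (k:ℝ) := by linarith
    have hlogk : 0 ≤ Real.log ((k:ℝ)+1) := Real.log_nonneg (by linarith)
    have h1 : ‖z k‖ ^ r ≤ (Real.log ((k:ℝ)+1) ^ (1-1/r) / (k:ℝ)) ^ r :=
      Real.rpow_le_rpow (norm_nonneg _) (hzk k hk1 hkn) hr0.le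
    have h2 : (Real.log ((k:ℝ)+1) ^ (1-1/r) / (k:ℝ)) ^ r
        = Real.log ((k:ℝ)+1) ^ t / (k:ℝ) ^ (t+1) := by
      rw [Real.div_rpow (Real.rpow_nonneg hlogk _) hk0.le, ← Real.rpow_mul hlogk]
      have he : (1-1/r) * r = t := by rw [ht_def]; field_simp
      have he2 : (t:ℝ)+1 = r := by rw [ht_def]; ring
      rw [he, he2]
    have h3 := key_step t ht0 ht1 (k:ℝ) hk1'
    rw [hg1 k]
    calc ‖z k‖ ^ r ≤ Real.log ((k:ℝ)+1) ^ t / (k:ℝ) ^ (t+1) := by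
          rw [← h2]; exact h1
      _ ≤ A * (Real.log (8*((k:ℝ)+1)) ^ t / (k:ℝ) ^ t
          - Real.log (8*((k:ℝ)+2)) ^ t / ((k:ℝ)+1) ^ t) := h3
      _ = A * (g k - Real.log (8*((k:ℝ)+2)) ^ t / ((k:ℝ)+1) ^ t) := rfl
  -- telescoping
  have htel : ∑ k ∈ Finset.Icc j n, (g k - g (k+1)) ≤ g j := by
    rw [← Finset.Ico_add_one_right_eq_Icc, Finset.sum_Ico_eq_sum_range]
    have h := Finset.sum_range_sub' (fun i => g (j+i)) (n+1-j)
    simp only [Nat.add_zero] at h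
    have heq : ∑ i ∈ Finset.range (n+1-j), (g (j+i) - g (j+i+1))
        = ∑ i ∈ Finset.range (n+1-j), ((fun i => g (j+i)) i - (fun i => g (j+i)) (i+1)) := by
      apply Finset.sum_congr rfl
      intro i _
      simp only [← add_assoc]
    rw [heq, h]
    have := hg_nonneg (j + (n+1-j))
    linarith
  -- sum bound
  set S := ∑ k ∈ Finset.Icc j n, ‖z k‖ ^ r with hS_def
  have hS_nonneg : 0 ≤ S := Finset.sum_nonneg fun k _ => Real.rpow_nonneg (norm_nonneg _) r
  have hSgj : S ≤ A * g j := by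
    calc S ≤ ∑ k ∈ Finset.Icc j n, A * (g k - g (k+1)) := Finset.sum_le_sum hterm
      _ = A * ∑ k ∈ Finset.Icc j n, (g k - g (k+1)) := by rw [Finset.mul_sum]
      _ ≤ A * g j := mul_le_mul_of_nonneg_left htel hA0.le
  -- bound g j
  have hJ1 : (1:ℝ) ≤ (j:ℝ) := by exact_mod_cast hj1
  have hJ0 : (0:ℝ) < (j:ℝ) := by linarith
  set L := Real.log ((j:ℝ)+1) with hL_def
  have hL0 : 0 < L := Real.log_pos (by linarith)
  have hgj : g j ≤ 4 * L ^ t / (j:ℝ) ^ t := by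
    have h8 : 8*((j:ℝ)+1) ≤ ((j:ℝ)+1) ^ (4:ℕ) := by
      have h2 : (2:ℝ) ≤ (j:ℝ)+1 := by linarith
      have h3 : (2:ℝ)^(3:ℕ) ≤ ((j:ℝ)+1)^(3:ℕ) := pow_le_pow_left₀ (by norm_num) h2 3
      nlinarith
    have hlog : Real.log (8*((j:ℝ)+1)) ≤ 4 * L := by
      calc Real.log (8*((j:ℝ)+1)) ≤ Real.log (((j:ℝ)+1) ^ (4:ℕ)) :=
            Real.log_le_log (by positivity) h8
        _ = 4 * L := by rw [Real.log_pow]; push_cast; ring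
    have h4t : (4:ℝ) ^ t ≤ 4 := by
      have := Real.rpow_le_rpow_of_exponent_le (by norm_num : (1:ℝ) ≤ 4) ht1
      rwa [Real.rpow_one] at this
    have hnum : Real.log (8*((j:ℝ)+1)) ^ t ≤ 4 * L ^ t := by
      calc Real.log (8*((j:ℝ)+1)) ^ t ≤ (4*L) ^ t :=
            Real.rpow_le_rpow (Real.log_nonneg (by linarith)) hlog ht0.le
        _ = 4 ^ t * L ^ t := Real.mul_rpow (by norm_num) hL0.le
        _ ≤ 4 * L ^ t := mul_le_mul_of_nonneg_right h4t (Real.rpow_nonneg hL0.le t)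
    simp only [hg_def]
    gcongr
  have hS4 : S ≤ (A*4) * (L ^ t / (j:ℝ) ^ t) := by
    calc S ≤ A * g j := hSgj
      _ ≤ A * (4 * L ^ t / (j:ℝ) ^ t) := mul_le_mul_of_nonneg_left hgj hA0.le
      _ = (A*4) * (L ^ t / (j:ℝ) ^ t) := by ring
  -- rpow of sum bound
  have hC1 : (1:ℝ) ≤ A*4 := by
    have hA1 : (1:ℝ) ≤ A := by
      rw [hA_def]
      rw [le_div_iff₀ ht0]
      linarith
    linarith
  have hw : t * (1/r) = 1 - 1/r := by rw [ht_def]; field_simp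
  have hSr : S ^ (1/r) ≤ (A*4) * (L ^ (1-1/r) / (j:ℝ) ^ (1-1/r)) := by
    have h1 : S ^ (1/r) ≤ ((A*4) * (L ^ t / (j:ℝ) ^ t)) ^ (1/r) :=
      Real.rpow_le_rpow hS_nonneg hS4 (by positivity)
    have h2 : ((A*4) * (L ^ t / (j:ℝ) ^ t)) ^ (1/r)
        = (A*4) ^ (1/r) * (L ^ (1-1/r) / (j:ℝ) ^ (1-1/r)) := by
      rw [Real.mul_rpow (by linarith) (by positivity),
        Real.div_rpow (Real.rpow_nonneg hL0.le t) (Real.rpow_nonneg hJ0.le t),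
        ← Real.rpow_mul hL0.le, ← Real.rpow_mul hJ0.le, hw]
    have h3 : (A*4) ^ (1/r) ≤ A*4 := by
      have := Real.rpow_le_rpow_of_exponent_le hC1
        (by rw [div_le_one hr0]; linarith : 1/r ≤ 1)
      rwa [Real.rpow_one] at this
    calc S ^ (1/r) ≤ (A*4) ^ (1/r) * (L ^ (1-1/r) / (j:ℝ) ^ (1-1/r)) := by rw [← h2]; exact h1
      _ ≤ (A*4) * (L ^ (1-1/r) / (j:ℝ) ^ (1-1/r)) :=
          mul_le_mul_of_nonneg_right h3 (by positivity)
  -- final combination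
  have hzj := hzk j hj1 hjn
  have hfinal : ‖z j‖ * S ^ (1/r)
      ≤ (A*4) * (L ^ (2/r') / (j:ℝ) ^ (1+1/r')) := by
    calc ‖z j‖ * S ^ (1/r)
        ≤ (L ^ (1-1/r) / (j:ℝ)) * ((A*4) * (L ^ (1-1/r) / (j:ℝ) ^ (1-1/r))) :=
          mul_le_mul hzj hSr (Real.rpow_nonneg hS_nonneg _) (by positivity)
      _ = (A*4) * ((L ^ (1-1/r) * L ^ (1-1/r)) / ((j:ℝ) ^ (1:ℝ) * (j:ℝ) ^ (1-1/r))) := by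
          rw [Real.rpow_one]; ring
      _ = (A*4) * (L ^ (2/r') / (j:ℝ) ^ (1+1/r')) := by
          have e1 : (1:ℝ)-1/r + (1-1/r) = 2/r' := by
            rw [show (2:ℝ)/r' = 1/r' + 1/r' by ring, h1r']
          have e2 : (1:ℝ) + (1-1/r) = 1+1/r' := by rw [h1r']
          rw [← Real.rpow_add hL0, ← Real.rpow_add hJ0, e1, e2]
  have hconst : A*4 ≤ 2 ^ (r+2) * (2*r/(r-1)^2) := by
    have hr2t : (2:ℝ) ^ (r+2) = 2 ^ (t+3) := by rw [ht_def]; ring_nf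
    rw [hr2t, hA_def]
    have hdiv : 4/t ≤ 2*(t+1)/t^2 := by
      rw [div_le_div_iff₀ ht0 (by positivity)]
      nlinarith
    have hrr : r = t+1 := by rw [ht_def]; ring
    rw [hrr, show (t+1-1)^2 = t^2 by ring]
    calc 2 ^ (t+3) / t * 4 = 2 ^ (t+3) * (4/t) := by ring
      _ ≤ 2 ^ (t+3) * (2*(t+1)/t^2) := mul_le_mul_of_nonneg_left hdiv (by positivity)
      _ = 2 ^ (t+3) * (2*(t+1)/t^2) := rfl
  calc ‖z j‖ * S ^ (1/r) ≤ (A*4) * (L ^ (2/r') / (j:ℝ) ^ (1+1/r')) := hfinal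
    _ ≤ (2 ^ (r+2) * (2*r/(r-1)^2)) * (L ^ (2/r') / (j:ℝ) ^ (1+1/r')) :=
        mul_le_mul_of_nonneg_right hconst (by positivity)
    _ = 2 ^ (r+2) * (2*r/(r-1)^2) * L ^ (2/r') / (j:ℝ) ^ (1+1/r') := by ring
end
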